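/- arXiv:2504.19426 — 6 statements merged into one kernel-verified Lean document; each statement's English description precedes it below -/
import Mathlib

section
/- Let d ∈ ℕ, let M, A_1, A_2, ... ∈ ℂ^{d×d} be matrices with lim_{n→∞} A_n = M, and let δ > 0. Then there exists a constant C > 0 such that for all m, n ∈ ℕ with m ≥ n the Frobenius norm of the product A_m · A_{m−1} · ... · A_{n+1} satisfies ‖A_m · A_{m−1} · ... · A_{n+1}‖ ≤ C · (ρ(M) + δ)^{m−n}, where ρ(M) denotes the spectral radius of M (the maximum absolute value of the eigenvalues of M). -/
/-!
Rescaling by `(ρ(M) + δ)⁻¹` reduces the claim to the case where the spectral radius of `M` is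
below `1`, so that `‖M ^ j‖ < 1` for some `j > 0` by Gelfand's formula. The products of `j`
consecutive factors converge to `M ^ j`, hence have norm at most `1` from some index `N` on.
A product starting after `N` is then a product of such blocks times fewer than `j` bounded
factors, and the factors before `N` contribute one more constant.
-/

open Filter

noncomputable section

/-- Frobenius norm of a complex matrix. -/
def frobNorm {d : ℕ} (A : Matrix (Fin d) (Fin d) ℂ) : ℝ :=
  Real.sqrt (∑ i, ∑ j, ‖A i j‖ ^ 2)

/-- Spectral radius of a complex matrix: the maximum absolute value of its eigenvalues. -/
def specRad {d : ℕ} (M : Matrix (Fin d) (Fin d) ℂ) : ℝ :=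
  sSup ((fun z : ℂ => ‖z‖) '' spectrum ℂ M)

/-- The product `A_m * A_{m-1} * ... * A_{n+1}` (the identity matrix if `m = n`). -/
def prodDesc {d : ℕ} (A : ℕ → Matrix (Fin d) (Fin d) ℂ) (n m : ℕ) :
    Matrix (Fin d) (Fin d) ℂ :=
  (((List.range' (n + 1) (m - n)).reverse).map A).prod

open Topology

/-- `descProd A n k = A (n + k) * ⋯ * A (n + 1)`, indexed by the number `k` of factors. -/
def descProd {R : Type*} [Monoid R] (A : ℕ → R) (n k : ℕ) : R :=
  ((List.range' (n + 1) k).reverse.map A).prod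

section Monoid

variable {R : Type*} [Monoid R] (A : ℕ → R)

@[simp]
theorem descProd_zero (n : ℕ) : descProd A n 0 = 1 := rfl

theorem descProd_succ (n k : ℕ) : descProd A n (k + 1) = A (n + k + 1) * descProd A n k := by
  simp [descProd, List.range'_concat, add_right_comm]

theorem descProd_add (n k l : ℕ) :
    descProd A n (k + l) = descProd A (n + k) l * descProd A n k := by
  rw [descProd, descProd, descProd, ← List.range'_append, List.reverse_append, List.map_append,
    List.prod_append, one_mul, add_right_comm]

end Monoid

theorem descProd_smul {S R : Type*} [CommSemiring S] [Semiring R] [Algebra S R] (c : S)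
    (A : ℕ → R) (n k : ℕ) : descProd (fun i => c • A i) n k = c ^ k • descProd A n k := by
  induction k with
  | zero => simp
  | succ k ih => rw [descProd_succ, descProd_succ, ih, smul_mul_smul_comm, pow_succ']

theorem tendsto_descProd {R : Type*} [Monoid R] [TopologicalSpace R] [ContinuousMul R]
    {A : ℕ → R} {M : R} (hA : Tendsto A atTop (𝓝 M)) (k : ℕ) :
    Tendsto (fun n => descProd A n k) atTop (𝓝 (M ^ k)) := by
  induction k with
  | zero => simpa using tendsto_const_nhds
  | succ k ih =>
    simp_rw [descProd_succ, pow_succ']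
    exact (hA.comp (tendsto_add_atTop_nat (k + 1))).mul ih

section NormedRing

variable {R : Type*} [NormedRing R] {A : ℕ → R} {K : ℝ}

theorem norm_descProd_le (hK : ∀ i, ‖A i‖ ≤ K) (n k : ℕ) :
    ‖descProd A n k‖ ≤ ‖(1 : R)‖ * K ^ k := by
  have hK0 : 0 ≤ K := (norm_nonneg _).trans (hK 0)
  induction k with
  | zero => simp
  | succ k ih =>
    calc ‖descProd A n (k + 1)‖ ≤ K * (‖(1 : R)‖ * K ^ k) := by
          rw [descProd_succ]; exact norm_mul_le_of_le (hK _) ih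
      _ = ‖(1 : R)‖ * K ^ (k + 1) := by ring

theorem norm_descProd_le_of_block (hK : ∀ i, ‖A i‖ ≤ K) (hK1 : 1 ≤ K) {N j : ℕ} (hj : 0 < j)
    (hblock : ∀ n ≥ N, ‖descProd A n j‖ ≤ 1) {n : ℕ} (hn : N ≤ n) (k : ℕ) :
    ‖descProd A n k‖ ≤ ‖(1 : R)‖ * K ^ j * ‖(1 : R)‖ := by
  have hblocks : ∀ q, ‖descProd A n (j * q)‖ ≤ ‖(1 : R)‖ := by
    intro q
    induction q with
    | zero => simp
    | succ q ih =>
      rw [mul_add_one, descProd_add, ← one_mul ‖(1 : R)‖]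
      exact norm_mul_le_of_le (hblock _ (by omega)) ih
  have hrem : ‖descProd A (n + j * (k / j)) (k % j)‖ ≤ ‖(1 : R)‖ * K ^ j :=
    (norm_descProd_le hK _ _).trans
      (by gcongr; exact (Nat.mod_lt k hj).le)
  rw [← Nat.div_add_mod k j, descProd_add]
  exact norm_mul_le_of_le hrem (hblocks _)

theorem exists_norm_descProd_le_of_forall_ge (hK : ∀ i, ‖A i‖ ≤ K) (hK1 : 1 ≤ K) {N : ℕ} {B : ℝ}
    (hB : ∀ n ≥ N, ∀ k, ‖descProd A n k‖ ≤ B) : ∃ C, ∀ n k, ‖descProd A n k‖ ≤ C := by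
  have hB0 : 0 ≤ B := (norm_nonneg _).trans (hB N le_rfl 0)
  have hinit : ∀ n k, k ≤ N → ‖descProd A n k‖ ≤ ‖(1 : R)‖ * K ^ N := fun n k hk =>
    (norm_descProd_le hK n k).trans (by gcongr)
  have hI0 : 0 ≤ ‖(1 : R)‖ * K ^ N := (norm_nonneg _).trans (hinit 0 0 (Nat.zero_le _))
  refine ⟨B + B * (‖(1 : R)‖ * K ^ N) + ‖(1 : R)‖ * K ^ N, fun n k => ?_⟩
  rcases le_or_gt N n with hn | hn
  · have := hB n hn k
    nlinarith
  rcases le_or_gt k (N - n) with hk | hk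
  · have := hinit n k (by omega)
    nlinarith
  obtain ⟨l, rfl⟩ : ∃ l, k = (N - n) + l := ⟨k - (N - n), by omega⟩
  have := norm_mul_le_of_le (hB (n + (N - n)) (by omega) l) (hinit n (N - n) (by omega))
  rw [← descProd_add] at this
  nlinarith

theorem exists_norm_descProd_le_of_tendsto {M : R} (hA : Tendsto A atTop (𝓝 M)) {j : ℕ}
    (hj : 0 < j) (hMj : ‖M ^ j‖ < 1) : ∃ C, ∀ n k, ‖descProd A n k‖ ≤ C := by
  obtain ⟨K, hK⟩ := hA.norm.bddAbove_range
  have hK' : ∀ i, ‖A i‖ ≤ max K 1 := fun i => (hK ⟨i, rfl⟩).trans (le_max_left _ _)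
  obtain ⟨N, hN⟩ := ((tendsto_descProd hA j).norm.eventually_lt_const hMj).exists_forall_of_atTop
  exact exists_norm_descProd_le_of_forall_ge hK' (le_max_right _ _) fun n hn =>
    norm_descProd_le_of_block hK' (le_max_right _ _) hj (fun n hn => (hN n hn).le) hn

end NormedRing

section ComplexBanachAlgebra

variable {R : Type*} [NormedRing R] [NormedAlgebra ℂ R] [CompleteSpace R]

theorem exists_norm_pow_lt_of_spectralRadius_lt {M : R} {r : ℝ}
    (hr : spectralRadius ℂ M < ENNReal.ofReal r) : ∃ j, 0 < j ∧ ‖M ^ j‖ < r ^ j := by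
  obtain ⟨j, hj, hlt⟩ := ((eventually_gt_atTop 0).and
    ((spectrum.pow_norm_pow_one_div_tendsto_nhds_spectralRadius M).eventually_lt_const hr)).exists
  obtain ⟨hlt, hr0⟩ := ENNReal.ofReal_lt_ofReal_iff'.mp hlt
  rw [one_div, Real.rpow_inv_lt_iff_of_pos (norm_nonneg _) hr0.le (by positivity),
    Real.rpow_natCast] at hlt
  exact ⟨j, hj, hlt⟩

theorem exists_norm_descProd_le_mul_pow {A : ℕ → R} {M : R} (hA : Tendsto A atTop (𝓝 M))
    {r : ℝ} (hr : spectralRadius ℂ M < ENNReal.ofReal r) :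
    ∃ C, ∀ n k, ‖descProd A n k‖ ≤ C * r ^ k := by
  obtain ⟨j, hj, hMj⟩ := exists_norm_pow_lt_of_spectralRadius_lt hr
  have hr0 : 0 < r := ENNReal.ofReal_pos.mp (hr.trans_le' bot_le)
  have hc : ‖((r⁻¹ : ℝ) : ℂ)‖ = r⁻¹ := by simp [hr0.le]
  obtain ⟨C, hC⟩ := exists_norm_descProd_le_of_tendsto (hA.const_smul ((r⁻¹ : ℝ) : ℂ)) hj
    (by rwa [smul_pow, norm_smul, norm_pow, hc, inv_pow, inv_mul_lt_one₀ (by positivity)])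
  refine ⟨C, fun n k => ?_⟩
  have := hC n k
  rwa [descProd_smul, norm_smul, norm_pow, hc, inv_pow, inv_mul_le_iff₀' (by positivity)] at this

end ComplexBanachAlgebra

section Matrix

attribute [local instance] Matrix.frobeniusNormedAddCommGroup

variable {d : ℕ}

theorem prodDesc_eq_descProd (A : ℕ → Matrix (Fin d) (Fin d) ℂ) (n m : ℕ) :
    prodDesc A n m = descProd A n (m - n) := rfl

theorem frobNorm_eq_norm (B : Matrix (Fin d) (Fin d) ℂ) : frobNorm B = ‖B‖ := by
  simp [frobNorm, Matrix.frobenius_norm_def, Real.sqrt_eq_rpow]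

theorem specRad_nonneg (M : Matrix (Fin d) (Fin d) ℂ) : 0 ≤ specRad M :=
  Real.sSup_nonneg fun _ ⟨z, _, hz⟩ => hz ▸ norm_nonneg z

theorem spectralRadius_le_ofReal_specRad (M : Matrix (Fin d) (Fin d) ℂ) :
    spectralRadius ℂ M ≤ ENNReal.ofReal (specRad M) := by
  have hbdd := (M.finite_spectrum.image fun z : ℂ => ‖z‖).bddAbove
  refine iSup₂_le fun z hz => ?_
  rw [← ENNReal.ofReal_coe_nnreal, coe_nnnorm]
  exact ENNReal.ofReal_le_ofReal (le_csSup hbdd ⟨z, hz, rfl⟩)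

end Matrix

theorem stmt0_general (d : ℕ)
    (A : ℕ → Matrix (Fin d) (Fin d) ℂ) (M : Matrix (Fin d) (Fin d) ℂ)
    (hA : Tendsto A atTop (nhds M)) (δ : ℝ) (hδ : 0 < δ) :
    ∃ C : ℝ, 0 < C ∧ ∀ m n : ℕ, n ≤ m →
      frobNorm (prodDesc A n m) ≤ C * (specRad M + δ) ^ (m - n) := by
  let _ : NormedRing (Matrix (Fin d) (Fin d) ℂ) := Matrix.frobeniusNormedRing
  let _ : NormedAlgebra ℂ (Matrix (Fin d) (Fin d) ℂ) := Matrix.frobeniusNormedAlgebra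
  have hρ := specRad_nonneg M
  have hr : spectralRadius ℂ M < ENNReal.ofReal (specRad M + δ) :=
    (spectralRadius_le_ofReal_specRad M).trans_lt
      ((ENNReal.ofReal_lt_ofReal_iff (by positivity)).mpr (lt_add_of_pos_right _ hδ))
  obtain ⟨C, hC⟩ := exists_norm_descProd_le_mul_pow hA hr
  refine ⟨max C 1, by positivity, fun m n _ => ?_⟩
  rw [frobNorm_eq_norm, prodDesc_eq_descProd]
  exact (hC n (m - n)).trans (by gcongr; exact le_max_left _ _)

/-- Generalization of Gelfand's spectral radius formula. -/
theorem stmt0 (d : ℕ) (hd : 0 < d)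
    (A : ℕ → Matrix (Fin d) (Fin d) ℂ) (M : Matrix (Fin d) (Fin d) ℂ)
    (hA : Tendsto A atTop (nhds M)) (δ : ℝ) (hδ : 0 < δ) :
    ∃ C : ℝ, 0 < C ∧ ∀ m n : ℕ, n ≤ m →
      frobNorm (prodDesc A n m) ≤ C * (specRad M + δ) ^ (m - n) :=
  stmt0_general d A M hA δ hδ
end
end

section
/- Let d ∈ ℕ, κ ∈ (0,∞), K ∈ (κ,∞), let g : ℝ^d → ℝ^d be continuous and differentiable at 0, assume g(0) = 0 and that every eigenvalue of the Jacobian (∇g)(0) lies in [κ, K], let Γ_1, Γ_2, ... ∈ (0,∞)^d and Θ_0, Θ_1, ... ∈ ℝ^d satisfy for all n ∈ ℕ that Θ_n = Θ_{n−1} − Γ_n ⊙ g(Θ_{n−1}), and assume lim_{n→∞} Γ_n = (2/(κ+K))·𝟙_d and lim_{n→∞} Θ_n = 0. Then for every δ > 0 there exists C > 0 such that for all n ∈ ℕ_0 it holds that ‖Θ_n‖ ≤ C · ((K−κ)/(K+κ) + δ)^n. -/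
open Filter

noncomputable section

/-- Componentwise (Hadamard) product of two vectors. -/
def had {d : ℕ} (x y : EuclideanSpace ℝ (Fin d)) : EuclideanSpace ℝ (Fin d) :=
  WithLp.toLp 2 (fun i => x i * y i)

/-- The all-ones vector. -/
def ones (d : ℕ) : EuclideanSpace ℝ (Fin d) := WithLp.toLp 2 (fun _ => 1)

/-- The Jacobian matrix of `g` at `x`. -/
def jacobian {d : ℕ} (g : EuclideanSpace ℝ (Fin d) → EuclideanSpace ℝ (Fin d))
    (x : EuclideanSpace ℝ (Fin d)) : Matrix (Fin d) (Fin d) ℝ :=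
  Matrix.of fun i j => fderiv ℝ g x (EuclideanSpace.single j 1) i

/-! Write `γ = 2 / (κ + K)`, `J` for the Jacobian of `g` at `0` and `T = 1 - γ J`. Since `g` is
differentiable at `0` with `g 0 = 0` and `Γ n → γ 𝟙`, the iteration is a small perturbation of
`T`: `Θ (n + 1) = T (Θ n) + o(‖Θ n‖)`. The eigenvalues of `T` are the `1 - γ t` with
`t ∈ [κ, K]`, so its spectral radius is at most `(K - κ) / (K + κ) < ρ`, where
`ρ = (K - κ) / (K + κ) + δ / 2`, and Gelfand's formula (for the complexified matrix) yields
`‖T ^ m‖ ≤ ρ ^ m` for some `m ≥ 1`. In the equivalent norm `N x = ∑_{k < m} ‖T ^ k x‖ / ρ ^ k`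
the map `T` contracts by the factor `ρ`, so eventually `N (Θ (n + 1)) ≤ (ρ + δ / 2) N (Θ n)`. -/

open Asymptotics
open scoped Matrix.Norms.L2Operator

theorem spectrum.eventually_norm_pow_le_of_spectralRadius_lt {A : Type*} [NormedRing A]
    [NormedAlgebra ℂ A] [CompleteSpace A] {a : A} {ρ : ℝ}
    (h : spectralRadius ℂ a < ENNReal.ofReal ρ) : ∀ᶠ n in atTop, ‖a ^ n‖ ≤ ρ ^ n := by
  filter_upwards [(pow_norm_pow_one_div_tendsto_nhds_spectralRadius a).eventually_lt_const h,
    eventually_ne_atTop 0] with n hn hn0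
  have hroot : ‖a ^ n‖ ^ (1 / n : ℝ) < ρ := (ENNReal.ofReal_lt_ofReal_iff'.mp hn).1
  calc ‖a ^ n‖ = (‖a ^ n‖ ^ (1 / n : ℝ)) ^ n := by
        rw [one_div, Real.rpow_inv_natCast_pow (norm_nonneg _) hn0]
    _ ≤ ρ ^ n := pow_le_pow_left₀ (by positivity) hroot.le n

theorem spectrum_one_sub_smul_subset {𝕜 A : Type*} [Field 𝕜] [Ring A] [Algebra 𝕜 A] (a : A)
    {γ : 𝕜} (hγ : γ ≠ 0) : spectrum 𝕜 (1 - γ • a) ⊆ (fun z => 1 - γ * z) '' spectrum 𝕜 a := by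
  rintro w hw
  rw [← map_one (algebraMap 𝕜 A), ← spectrum.singleton_sub_eq,
    show γ • a = (Units.mk0 γ hγ) • a from rfl, spectrum.unit_smul_eq_smul] at hw
  obtain ⟨_, rfl, _, ⟨z, hz, rfl⟩, rfl⟩ := hw
  exact ⟨z, hz, rfl⟩

theorem abs_one_sub_two_div_add_mul_le {κ K t : ℝ} (hκK : 0 < κ + K) (ht : t ∈ Set.Icc κ K) :
    |1 - 2 / (κ + K) * t| ≤ (K - κ) / (K + κ) := by
  rw [show 1 - 2 / (κ + K) * t = (κ + K - 2 * t) / (κ + K) by field_simp, abs_div,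
    abs_of_pos hκK, add_comm K κ]
  gcongr
  exact abs_le.mpr ⟨by linarith [ht.2], by linarith [ht.1]⟩

theorem spectralRadius_one_sub_smul_le {A : Type*} [Ring A] [Algebra ℂ A] {a : A} {κ K : ℝ}
    (hκK : 0 < κ + K) (ha : spectrum ℂ a ⊆ Complex.ofReal '' Set.Icc κ K) :
    spectralRadius ℂ (1 - ((2 / (κ + K) : ℝ) : ℂ) • a) ≤ ENNReal.ofReal ((K - κ) / (K + κ)) := by
  refine iSup₂_le fun w hw => ?_
  have hγ : ((2 / (κ + K) : ℝ) : ℂ) ≠ 0 := by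
    exact_mod_cast (by positivity : (2 / (κ + K) : ℝ) ≠ 0)
  obtain ⟨z, hz, rfl⟩ := spectrum_one_sub_smul_subset a hγ hw
  obtain ⟨t, ht, rfl⟩ := ha hz
  have hreal : 1 - ((2 / (κ + K) : ℝ) : ℂ) * t = ((1 - 2 / (κ + K) * t : ℝ) : ℂ) := by
    push_cast; rfl
  beta_reduce
  rw [hreal, ← enorm_eq_nnnorm, ← ofReal_norm, Complex.norm_real, Real.norm_eq_abs]
  exact ENNReal.ofReal_le_ofReal (abs_one_sub_two_div_add_mul_le hκK ht)

theorem exists_le_mul_pow_of_eventually_le_mul {a : ℕ → ℝ} {r : ℝ} (hr : 0 < r)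
    (h : ∀ᶠ n in atTop, a (n + 1) ≤ r * a n) : ∃ C, 0 < C ∧ ∀ n, a n ≤ C * r ^ n := by
  obtain ⟨n₀, hn₀⟩ := eventually_atTop.mp h
  set C := 1 + ∑ k ∈ Finset.range (n₀ + 1), |a k| / r ^ k
  have hC : ∀ k ≤ n₀, |a k| / r ^ k ≤ C := fun k hk => by
    have := Finset.single_le_sum (f := fun k => |a k| / r ^ k) (fun k _ => by positivity)
      (Finset.mem_range_succ_iff.mpr hk)
    linarith
  have hlate : ∀ n, n₀ ≤ n → a n ≤ a n₀ / r ^ n₀ * r ^ n := by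
    refine Nat.le_induction (by rw [div_mul_cancel₀ _ (by positivity)]) fun n hn ih => ?_
    calc a (n + 1) ≤ r * a n := hn₀ n hn
      _ ≤ r * (a n₀ / r ^ n₀ * r ^ n) := by gcongr
      _ = a n₀ / r ^ n₀ * r ^ (n + 1) := by ring
  refine ⟨C, by positivity, fun n => ?_⟩
  rcases le_total n n₀ with hn | hn
  · calc a n ≤ |a n| / r ^ n * r ^ n := by
          rw [div_mul_cancel₀ _ (by positivity)]; exact le_abs_self _
      _ ≤ C * r ^ n := by gcongr; exact hC n hn
  · calc a n ≤ a n₀ / r ^ n₀ * r ^ n := hlate n hn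
      _ ≤ |a n₀| / r ^ n₀ * r ^ n := by gcongr; exact le_abs_self _
      _ ≤ C * r ^ n := by gcongr; exact hC n₀ le_rfl

section AdaptedNorm

variable {𝕜 E : Type*} [NontriviallyNormedField 𝕜] [NormedAddCommGroup E] [NormedSpace 𝕜 E]

def adaptedNorm (T : E →L[𝕜] E) (ρ : ℝ) (m : ℕ) (x : E) : ℝ :=
  ∑ k ∈ Finset.range m, ‖(T ^ k) x‖ / ρ ^ k

variable {T : E →L[𝕜] E} {ρ : ℝ} {m : ℕ}

theorem norm_le_adaptedNorm (hρ : 0 ≤ ρ) (hm : 0 < m) (x : E) : ‖x‖ ≤ adaptedNorm T ρ m x := by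
  calc ‖x‖ = ‖(T ^ 0) x‖ / ρ ^ 0 := by simp
    _ ≤ adaptedNorm T ρ m x :=
      Finset.single_le_sum (f := fun k => ‖(T ^ k) x‖ / ρ ^ k) (fun k _ => by positivity)
        (Finset.mem_range.mpr hm)

theorem adaptedNorm_add_le (hρ : 0 ≤ ρ) (x y : E) :
    adaptedNorm T ρ m (x + y) ≤ adaptedNorm T ρ m x + adaptedNorm T ρ m y := by
  rw [adaptedNorm, adaptedNorm, adaptedNorm, ← Finset.sum_add_distrib]
  gcongr with k
  rw [← add_div, map_add]
  gcongr
  exact norm_add_le _ _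

theorem adaptedNorm_le (hρ : 0 ≤ ρ) (x : E) :
    adaptedNorm T ρ m x ≤ (∑ k ∈ Finset.range m, ‖T ^ k‖ / ρ ^ k) * ‖x‖ := by
  rw [adaptedNorm, Finset.sum_mul]
  gcongr with k
  rw [div_mul_eq_mul_div]
  gcongr
  exact (T ^ k).le_opNorm x

theorem adaptedNorm_apply_le (hρ : 0 < ρ) (hT : ‖T ^ m‖ ≤ ρ ^ m) (x : E) :
    adaptedNorm T ρ m (T x) ≤ ρ * adaptedNorm T ρ m x := by
  set f : ℕ → ℝ := fun k => ‖(T ^ k) x‖ / ρ ^ k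
  have hshift : adaptedNorm T ρ m (T x) = ρ * ∑ k ∈ Finset.range m, f (k + 1) := by
    rw [adaptedNorm, Finset.mul_sum]
    refine Finset.sum_congr rfl fun k _ => ?_
    simp only [f, pow_succ, mul_apply_eq_comp]
    field_simp
  have htop : f m ≤ f 0 := by
    simp only [f, pow_zero, div_one, one_apply_eq_self]
    rw [div_le_iff₀ (by positivity), mul_comm]
    exact ((T ^ m).le_opNorm x).trans (by gcongr)
  have hsum := Finset.sum_range_succ f m
  rw [Finset.sum_range_succ'] at hsum
  rw [hshift]
  gcongr
  rw [adaptedNorm]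
  linarith

theorem exists_norm_le_mul_pow_of_isLittleO (T : E →L[𝕜] E) {m : ℕ} (hm : 0 < m) {ρ : ℝ}
    (hρ : 0 < ρ) (hT : ‖T ^ m‖ ≤ ρ ^ m) {x : ℕ → E}
    (hx : (fun n => x (n + 1) - T (x n)) =o[atTop] x) {δ : ℝ} (hδ : 0 < δ) :
    ∃ C, 0 < C ∧ ∀ n, ‖x n‖ ≤ C * (ρ + δ) ^ n := by
  set N := adaptedNorm T ρ m
  set c := ∑ k ∈ Finset.range m, ‖T ^ k‖ / ρ ^ k
  have hc : 0 ≤ c := by positivity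
  have hstep : ∀ᶠ n in atTop, N (x (n + 1)) ≤ (ρ + δ) * N (x n) := by
    filter_upwards [hx.def (by positivity : 0 < δ / (c + 1))] with n hn
    have herr : c * ‖x (n + 1) - T (x n)‖ ≤ δ * N (x n) :=
      calc c * ‖x (n + 1) - T (x n)‖ ≤ c * (δ / (c + 1) * ‖x n‖) := by gcongr
        _ ≤ δ * ‖x n‖ := by
          rw [← mul_assoc, mul_div_assoc']
          gcongr
          rw [div_le_iff₀ (by positivity)]
          nlinarith
        _ ≤ δ * N (x n) := by gcongr; exact norm_le_adaptedNorm hρ.le hm _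
    calc N (x (n + 1)) = N (T (x n) + (x (n + 1) - T (x n))) := by rw [add_sub_cancel]
      _ ≤ N (T (x n)) + N (x (n + 1) - T (x n)) := adaptedNorm_add_le hρ.le _ _
      _ ≤ ρ * N (x n) + c * ‖x (n + 1) - T (x n)‖ :=
        add_le_add (adaptedNorm_apply_le hρ hT _) (adaptedNorm_le hρ.le _)
      _ ≤ (ρ + δ) * N (x n) := by linarith
  obtain ⟨C, hC, hle⟩ := exists_le_mul_pow_of_eventually_le_mul (a := fun n => N (x n))
    (add_pos hρ hδ) hstep
  exact ⟨C, hC, fun n => (norm_le_adaptedNorm hρ.le hm _).trans (hle n)⟩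

end AdaptedNorm

theorem Matrix.toEuclideanCLM_of_apply_single {𝕜 n : Type*} [RCLike 𝕜] [Fintype n]
    [DecidableEq n] (L : EuclideanSpace 𝕜 n →L[𝕜] EuclideanSpace 𝕜 n) :
    toEuclideanCLM (𝕜 := 𝕜) (Matrix.of fun i j => L (EuclideanSpace.single j 1) i) = L := by
  refine ContinuousLinearMap.coe_injective ((EuclideanSpace.basisFun n 𝕜).toBasis.ext fun j => ?_)
  ext i
  simp [EuclideanSpace.basisFun_apply, Matrix.mulVec, dotProduct, PiLp.single_apply]

theorem toEuclideanCLM_jacobian {d : ℕ} (g : EuclideanSpace ℝ (Fin d) → EuclideanSpace ℝ (Fin d))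
    (x : EuclideanSpace ℝ (Fin d)) :
    Matrix.toEuclideanCLM (𝕜 := ℝ) (jacobian g x) = fderiv ℝ g x :=
  Matrix.toEuclideanCLM_of_apply_single _

theorem EuclideanSpace.norm_toLp_ofReal {n : Type*} [Fintype n] (v : n → ℝ) :
    ‖WithLp.toLp 2 (fun i => (v i : ℂ))‖ = ‖WithLp.toLp 2 v‖ := by
  simp [EuclideanSpace.norm_eq]

theorem Matrix.norm_toEuclideanCLM_le_norm_map_ofReal {n : Type*} [Fintype n] [DecidableEq n]
    (A : Matrix n n ℝ) : ‖toEuclideanCLM (𝕜 := ℝ) A‖ ≤ ‖A.map Complex.ofReal‖ := by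
  refine ContinuousLinearMap.opNorm_le_bound _ (norm_nonneg _) fun x => ?_
  have key := (toEuclideanCLM (𝕜 := ℂ) (A.map Complex.ofReal)).le_opNorm
    (WithLp.toLp 2 fun i => (x i : ℂ))
  rw [toEuclideanCLM_toLp, EuclideanSpace.norm_toLp_ofReal] at key
  have hmul : (A.map Complex.ofReal).mulVec (fun i => (x i : ℂ)) =
      fun i => (A.mulVec x.ofLp i : ℂ) :=
    funext fun i => (RingHom.map_mulVec Complex.ofRealHom A x.ofLp i).symm
  rw [hmul, EuclideanSpace.norm_toLp_ofReal, WithLp.toLp_ofLp] at key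
  exact key

theorem norm_had_le {d : ℕ} (x y : EuclideanSpace ℝ (Fin d)) : ‖had x y‖ ≤ ‖x‖ * ‖y‖ := by
  have hdiag : had x y = Matrix.toEuclideanCLM (𝕜 := ℝ) (Matrix.diagonal x.ofLp) y := by
    ext i; simp [had, Matrix.mulVec_diagonal]
  rw [hdiag]
  refine ((Matrix.toEuclideanCLM (𝕜 := ℝ) _).le_opNorm y).trans ?_
  rw [Matrix.l2_opNorm_toEuclideanCLM, Matrix.l2_opNorm_diagonal]
  gcongr
  exact pi_norm_le_iff_of_nonneg (norm_nonneg x) |>.mpr (PiLp.norm_apply_le x)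

theorem had_sub_left {d : ℕ} (a b v : EuclideanSpace ℝ (Fin d)) :
    had (a - b) v = had a v - had b v := by
  ext i; simp [had, sub_mul]

theorem had_smul_ones {d : ℕ} (c : ℝ) (v : EuclideanSpace ℝ (Fin d)) :
    had (c • ones d) v = c • v := by
  ext i; simp [had, ones]

theorem isLittleO_had_of_tendsto_zero {α F : Type*} [SeminormedAddCommGroup F] {d : ℕ}
    {l : Filter α} {a b : α → EuclideanSpace ℝ (Fin d)} {f : α → F} (ha : Tendsto a l (nhds 0))
    (hb : b =O[l] f) :
    (fun x => had (a x) (b x)) =o[l] f := by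
  have hprod : (fun x => ‖a x‖ * ‖b x‖) =o[l] fun x => (1 : ℝ) * ‖f x‖ :=
    ((isLittleO_one_iff ℝ).mpr ha).norm_left.mul_isBigO hb.norm_norm
  simp only [one_mul] at hprod
  refine (isBigO_of_le l fun x => ?_).trans_isLittleO hprod.of_norm_right
  rw [Real.norm_of_nonneg (by positivity)]
  exact norm_had_le _ _

theorem isLittleO_step_sub_linearization {d : ℕ}
    {g : EuclideanSpace ℝ (Fin d) → EuclideanSpace ℝ (Fin d)} (hgd : DifferentiableAt ℝ g 0)
    (hg0 : g 0 = 0) {γ : ℝ} {Γ Θ : ℕ → EuclideanSpace ℝ (Fin d)}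
    (hΘ : ∀ n, Θ (n + 1) = Θ n - had (Γ (n + 1)) (g (Θ n)))
    (hΓ : Tendsto Γ atTop (nhds (γ • ones d))) (hΘlim : Tendsto Θ atTop (nhds 0)) :
    (fun n => Θ (n + 1) - (Θ n - γ • fderiv ℝ g 0 (Θ n))) =o[atTop] Θ := by
  have hrem : (fun n => g (Θ n) - fderiv ℝ g 0 (Θ n)) =o[atTop] Θ := by
    simpa [hg0, Function.comp_def] using hgd.hasFDerivAt.isLittleO.comp_tendsto hΘlim
  have hgO : (fun n => g (Θ n)) =O[atTop] Θ := by
    simpa [hg0, Function.comp_def] using hgd.isBigO_sub.comp_tendsto hΘlim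
  have hrate : Tendsto (fun n => γ • ones d - Γ (n + 1)) atTop (nhds 0) := by
    simpa only [sub_self, Function.comp_def] using
      (tendsto_const_nhds (x := γ • ones d)).sub (hΓ.comp (tendsto_add_atTop_nat 1))
  refine ((isLittleO_had_of_tendsto_zero hrate hgO).sub (hrem.const_smul_left γ)).congr_left
    fun n => ?_
  rw [hΘ n, Pi.smul_apply, had_sub_left, had_smul_ones]
  module

theorem stmt2_general (d : ℕ) (κ K : ℝ) (hκ : 0 < κ) (hκK : κ < K)
    (g : EuclideanSpace ℝ (Fin d) → EuclideanSpace ℝ (Fin d))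
    (hgd : DifferentiableAt ℝ g 0) (hg0 : g 0 = 0)
    -- every (complex) eigenvalue of the Jacobian (∇g)(0) lies in [κ, K]
    (hspec : spectrum ℂ ((jacobian g 0).map Complex.ofReal) ⊆
      Complex.ofReal '' Set.Icc κ K)
    (Γ : ℕ → EuclideanSpace ℝ (Fin d))
    (Θ : ℕ → EuclideanSpace ℝ (Fin d))
    (hΘ : ∀ n : ℕ, Θ (n + 1) = Θ n - had (Γ (n + 1)) (g (Θ n)))
    (hΓlim : Tendsto Γ atTop (nhds ((2 / (κ + K)) • ones d)))
    (hΘlim : Tendsto Θ atTop (nhds 0))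
    (δ : ℝ) (hδ : 0 < δ) :
    ∃ C : ℝ, 0 < C ∧ ∀ n : ℕ, ‖Θ n‖ ≤ C * ((K - κ) / (K + κ) + δ) ^ n := by
  set γ := 2 / (κ + K)
  set ρ := (K - κ) / (K + κ) + δ / 2
  have hρ₀ : 0 ≤ (K - κ) / (K + κ) := div_nonneg (by linarith) (by linarith)
  have hρ : 0 < ρ := by positivity
  set M := 1 - γ • jacobian g 0
  have hM : spectralRadius ℂ (M.map Complex.ofReal) < ENNReal.ofReal ρ := by
    have hmap : M.map Complex.ofReal = 1 - (γ : ℂ) • (jacobian g 0).map Complex.ofReal := by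
      ext i j; simp [M, Matrix.one_apply, apply_ite Complex.ofReal]
    rw [hmap]
    exact (spectralRadius_one_sub_smul_le (by linarith) hspec).trans_lt
      ((ENNReal.ofReal_lt_ofReal_iff hρ).mpr (lt_add_of_pos_right _ (half_pos hδ)))
  obtain ⟨m, hMm, hm⟩ :=
    ((spectrum.eventually_norm_pow_le_of_spectralRadius_lt hM).and (eventually_gt_atTop 0)).exists
  set T := Matrix.toEuclideanCLM (𝕜 := ℝ) M
  have hTm : ‖T ^ m‖ ≤ ρ ^ m := by
    rw [← map_pow]
    refine (Matrix.norm_toEuclideanCLM_le_norm_map_ofReal _).trans ?_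
    rwa [show (M ^ m).map Complex.ofReal = M.map Complex.ofReal ^ m from
      M.map_pow Complex.ofRealHom m]
  have hT : ∀ x, T x = x - γ • fderiv ℝ g 0 x := fun x => by
    simp [T, M, toEuclideanCLM_jacobian]
  have hlin := isLittleO_step_sub_linearization hgd hg0 hΘ hΓlim hΘlim
  simp only [← hT] at hlin
  obtain ⟨C, hC, hbound⟩ := exists_norm_le_mul_pow_of_isLittleO T hm hρ hTm hlin (half_pos hδ)
  exact ⟨C, hC, fun n => (hbound n).trans_eq (by simp only [ρ, add_assoc, add_halves])⟩

/-- GD with convergent adaptive learning rates. -/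
theorem stmt2 (d : ℕ) (hd : 0 < d) (κ K : ℝ) (hκ : 0 < κ) (hκK : κ < K)
    (g : EuclideanSpace ℝ (Fin d) → EuclideanSpace ℝ (Fin d))
    (hgc : Continuous g) (hgd : DifferentiableAt ℝ g 0) (hg0 : g 0 = 0)
    -- every (complex) eigenvalue of the Jacobian (∇g)(0) lies in [κ, K]
    (hspec : spectrum ℂ ((jacobian g 0).map Complex.ofReal) ⊆
      Complex.ofReal '' Set.Icc κ K)
    (Γ : ℕ → EuclideanSpace ℝ (Fin d)) (hΓpos : ∀ n : ℕ, ∀ i, 0 < Γ (n + 1) i)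
    (Θ : ℕ → EuclideanSpace ℝ (Fin d))
    (hΘ : ∀ n : ℕ, Θ (n + 1) = Θ n - had (Γ (n + 1)) (g (Θ n)))
    (hΓlim : Tendsto Γ atTop (nhds ((2 / (κ + K)) • ones d)))
    (hΘlim : Tendsto Θ atTop (nhds 0))
    (δ : ℝ) (hδ : 0 < δ) :
    ∃ C : ℝ, 0 < C ∧ ∀ n : ℕ, ‖Θ n‖ ≤ C * ((K - κ) / (K + κ) + δ) ^ n :=
  stmt2_general d κ K hκ hκK g hgd hg0 hspec Γ Θ hΘ hΓlim hΘlim δ hδ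
end
end

section
/- Let d ∈ ℕ, ε, κ ∈ (0,∞), K ∈ (κ,∞), γ ∈ (0, 2ε/K), β ∈ [0,1], let L : ℝ^d → ℝ be twice continuously differentiable with (∇L)(0) = 0 and κ I_d ⪯ (Hess L)(0) ⪯ K I_d, and for every θ ∈ ℝ^d let 𝕄^θ, Θ^θ : ℕ_0 → ℝ^d satisfy Θ_0^θ = θ, 𝕄_0^θ = 0, and for all n ∈ ℕ: 𝕄_n^θ = β 𝕄_{n−1}^θ + (1−β)(∇L(Θ_{n−1}^θ))^{⊙2} and Θ_n^θ = Θ_{n−1}^θ − γ (ε𝟙_d + (𝕄_n^θ)^{⊙1/2})^{⊙(−1)} ⊙ (∇L)(Θ_{n−1}^θ). Then there exists η > 0 such that for all θ ∈ B_η(0) it holds that lim_{n→∞} (‖Θ_n^θ‖ + ‖𝕄_n^θ‖) = 0. -/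
/-!
Near `0` the Hessian bounds persist up to a small `δ`: on a small ball, `L` is `(κ - δ)`-strongly
convex and `(K + δ)`-smooth, and `‖∇L x‖` is comparable to `‖x‖`. While `Θ` stays in a smaller
ball, the gradients are bounded by some `G`, hence so are the coordinates of `𝕄^{⊙1/2}`, and an
RMSprop step is a gradient step preconditioned by a diagonal matrix with entries in
`[γ / (ε + G), γ / ε]`. Because `γ (K + δ) < 2 ε`, the descent lemma makes each step decrease `L`
by a fixed multiple of `‖∇L Θₙ‖²`, and the Polyak–Łojasiewicz inequality turns this into geometric
decay of `L Θₙ - L 0`, hence of `‖Θₙ‖²`; for `θ` close enough to `0` this decay keeps `Θ` in the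
smaller ball, which closes the induction. Finally `𝕄` is an exponential moving average of squared
gradients that decay geometrically, so it tends to `0` as well.
-/

open Filter Set Metric
open scoped Topology RealInnerProductSpace NNReal

noncomputable section

/-- Componentwise square. -/
def sq2 {d : ℕ} (x : EuclideanSpace ℝ (Fin d)) : EuclideanSpace ℝ (Fin d) :=
  WithLp.toLp 2 (fun i => (x i) ^ 2)

/-- The vector `(ε𝟙_d + b • x^{⊙1/2})^{⊙(-1)}`, i.e. componentwise `(ε + b·√(x i))⁻¹`. -/
def regInvSqrt {d : ℕ} (ε b : ℝ) (x : EuclideanSpace ℝ (Fin d)) :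
    EuclideanSpace ℝ (Fin d) :=
  WithLp.toLp 2 (fun i => (ε + b * Real.sqrt (x i))⁻¹)

section Calculus

variable {E : Type*} [NormedAddCommGroup E] [InnerProductSpace ℝ E]

theorem Convex.le_add_inner_add_of_inner_sub_le [CompleteSpace E] {f : E → ℝ} {f' : E → E}
    {s : Set E} {C : ℝ} (hs : Convex ℝ s) (hf : ∀ x ∈ s, HasGradientAt f (f' x) x)
    (hC : ∀ x ∈ s, ∀ y ∈ s, ⟪f' y - f' x, y - x⟫ ≤ C * ‖y - x‖ ^ 2) {x y : E}
    (hx : x ∈ s) (hy : y ∈ s) :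
    f y ≤ f x + ⟪f' x, y - x⟫ + C / 2 * ‖y - x‖ ^ 2 := by
  set u := y - x
  have hseg : ∀ t ∈ Icc (0 : ℝ) 1, x + t • u ∈ s := fun t ht => hs.add_smul_sub_mem hx hy ht
  set φ : ℝ → ℝ := fun t => f (x + t • u) - t * ⟪f' x, u⟫ - C / 2 * ‖u‖ ^ 2 * t ^ 2
  have hφ : ∀ t ∈ Icc (0 : ℝ) 1,
      HasDerivAt φ (⟪f' (x + t • u), u⟫ - ⟪f' x, u⟫ - C / 2 * ‖u‖ ^ 2 * (2 * t)) t := by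
    intro t ht
    have hline : HasDerivAt (fun s : ℝ => x + s • u) u t := by
      simpa using ((hasDerivAt_id t).smul_const u).const_add x
    have hcomp := (hf _ (hseg t ht)).hasFDerivAt.comp_hasDerivAt t hline
    refine (hcomp.sub (hasDerivAt_mul_const _)).sub ?_
    simpa using (hasDerivAt_pow 2 t).const_mul (C / 2 * ‖u‖ ^ 2)
  have hφ' : ∀ t ∈ interior (Icc (0 : ℝ) 1),
      ⟪f' (x + t • u), u⟫ - ⟪f' x, u⟫ - C / 2 * ‖u‖ ^ 2 * (2 * t) ≤ 0 := by
    rw [interior_Icc]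
    rintro t ⟨ht0, ht1⟩
    have h := hC x hx _ (hseg t ⟨ht0.le, ht1.le⟩)
    rw [add_sub_cancel_left, inner_smul_right, norm_smul, Real.norm_of_nonneg ht0.le] at h
    rw [← inner_sub_left]
    nlinarith
  have hanti : AntitoneOn φ (Icc 0 1) := by
    refine antitoneOn_of_deriv_nonpos (convex_Icc 0 1)
      (fun t ht => (hφ t ht).continuousAt.continuousWithinAt)
      (fun t ht => (hφ t (interior_subset ht)).differentiableAt.differentiableWithinAt)
      (fun t ht => ?_)
    rw [(hφ t (interior_subset ht)).deriv]
    exact hφ' t ht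
  have h10 := hanti (left_mem_Icc.2 zero_le_one) (right_mem_Icc.2 zero_le_one) zero_le_one
  norm_num [φ, u] at h10
  linarith

theorem Convex.add_inner_add_le_of_le_inner_sub [CompleteSpace E] {f : E → ℝ} {f' : E → E}
    {s : Set E} {c : ℝ} (hs : Convex ℝ s) (hf : ∀ x ∈ s, HasGradientAt f (f' x) x)
    (hc : ∀ x ∈ s, ∀ y ∈ s, c * ‖y - x‖ ^ 2 ≤ ⟪f' y - f' x, y - x⟫) {x y : E}
    (hx : x ∈ s) (hy : y ∈ s) :
    f x + ⟪f' x, y - x⟫ + c / 2 * ‖y - x‖ ^ 2 ≤ f y := by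
  have hneg : ∀ x ∈ s, HasGradientAt (fun z => -f z) (-f' x) x := fun x hx => by
    rw [hasGradientAt_iff_hasFDerivAt, map_neg]
    exact (hf x hx).hasFDerivAt.neg
  have h := hs.le_add_inner_add_of_inner_sub_le (C := -c) hneg (fun x hx y hy => by
    rw [neg_sub_neg, ← neg_sub, inner_neg_left]; linarith [hc x hx y hy]) hx hy
  rw [inner_neg_left] at h
  linarith

theorem ApproximatesLinearOn.inner_sub_le {g : E → E} {H : E →L[ℝ] E} {s : Set E} {δ : ℝ≥0}
    {K : ℝ} (hg : ApproximatesLinearOn g H s δ) (hH : ∀ v, ⟪v, H v⟫ ≤ K * ‖v‖ ^ 2)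
    {x y : E} (hx : x ∈ s) (hy : y ∈ s) :
    ⟪g y - g x, y - x⟫ ≤ (K + δ) * ‖y - x‖ ^ 2 := by
  have hsplit : ⟪g y - g x, y - x⟫ = ⟪y - x, H (y - x)⟫ + ⟪g y - g x - H (y - x), y - x⟫ := by
    rw [real_inner_comm (H (y - x)), ← inner_add_left, add_sub_cancel]
  have herr := (real_inner_le_norm _ _).trans
    (mul_le_mul_of_nonneg_right (hg y hy x hx) (norm_nonneg (y - x)))
  nlinarith [hH (y - x)]

theorem ApproximatesLinearOn.le_inner_sub {g : E → E} {H : E →L[ℝ] E} {s : Set E} {δ : ℝ≥0}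
    {κ : ℝ} (hg : ApproximatesLinearOn g H s δ) (hH : ∀ v, κ * ‖v‖ ^ 2 ≤ ⟪v, H v⟫)
    {x y : E} (hx : x ∈ s) (hy : y ∈ s) :
    (κ - δ) * ‖y - x‖ ^ 2 ≤ ⟪g y - g x, y - x⟫ := by
  have hsplit : ⟪g y - g x, y - x⟫ = ⟪y - x, H (y - x)⟫ + ⟪g y - g x - H (y - x), y - x⟫ := by
    rw [real_inner_comm (H (y - x)), ← inner_add_left, add_sub_cancel]
  have herr := (neg_le_of_abs_le (abs_real_inner_le_norm _ _)).trans' <| neg_le_neg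
    (mul_le_mul_of_nonneg_right (hg y hy x hx) (norm_nonneg (y - x)))
  nlinarith [hH (y - x)]

theorem ApproximatesLinearOn.norm_le {g : E → E} {H : E →L[ℝ] E} {s : Set E} {δ : ℝ≥0}
    (hg : ApproximatesLinearOn g H s δ) (hg0 : g 0 = 0) (h0 : (0 : E) ∈ s) {x : E}
    (hx : x ∈ s) : ‖g x‖ ≤ (‖H‖ + δ) * ‖x‖ := by
  have herr := hg x hx 0 h0
  rw [hg0, sub_zero, sub_zero] at herr
  calc ‖g x‖ = ‖H x + (g x - H x)‖ := by rw [add_sub_cancel]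
    _ ≤ ‖H‖ * ‖x‖ + δ * ‖x‖ := norm_add_le_of_le (H.le_opNorm x) herr
    _ = (‖H‖ + δ) * ‖x‖ := by ring

theorem HasStrictFDerivAt.exists_approximatesLinearOn_closedBall {g : E → E} {H : E →L[ℝ] E}
    {a : E} (hg : HasStrictFDerivAt g H a) {δ : ℝ≥0} (hδ : 0 < δ) :
    ∃ r > 0, ApproximatesLinearOn g H (closedBall a r) δ := by
  obtain ⟨s, hs, hgs⟩ := hg.approximates_deriv_on_nhds (Or.inr hδ)
  obtain ⟨r, hr, hrs⟩ := Metric.mem_nhds_iff.1 hs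
  exact ⟨r / 2, half_pos hr,
    hgs.mono_set ((closedBall_subset_ball (half_lt_self hr)).trans hrs)⟩

theorem ContDiff.gradient_right [CompleteSpace E] {L : E → ℝ} {m n : WithTop ℕ∞}
    (hL : ContDiff ℝ n L) (hmn : m + 1 ≤ n) : ContDiff ℝ m (gradient L) :=
  (InnerProductSpace.toDual ℝ E).symm.toContinuousLinearEquiv.contDiff.comp
    (hL.fderiv_right hmn)

/-- Estimates near a nondegenerate minimum of `L` at `0`, with `g` in the role of `∇L`. -/
structure QuadraticBoundsOnBall (L : E → ℝ) (g : E → E) (r c C K : ℝ) : Prop where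
  norm_le : ∀ x, ‖x‖ ≤ r → ‖g x‖ ≤ C * ‖x‖
  le_norm : ∀ x, ‖x‖ ≤ r → c * ‖x‖ ≤ ‖g x‖
  le_add_inner : ∀ x y, ‖x‖ ≤ r → ‖y‖ ≤ r → L y ≤ L x + ⟪g x, y - x⟫ + K / 2 * ‖y - x‖ ^ 2
  le_sub : ∀ x, ‖x‖ ≤ r → c / 2 * ‖x‖ ^ 2 ≤ L x - L 0

theorem ApproximatesLinearOn.quadraticBoundsOnBall [CompleteSpace E] {L : E → ℝ} {g : E → E}
    {H : E →L[ℝ] E} {r κ K : ℝ} {δ : ℝ≥0} (hL : ∀ x, HasGradientAt L (g x) x) (hg0 : g 0 = 0)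
    (hg : ApproximatesLinearOn g H (closedBall 0 r) δ)
    (hH : ∀ v, κ * ‖v‖ ^ 2 ≤ ⟪v, H v⟫ ∧ ⟪v, H v⟫ ≤ K * ‖v‖ ^ 2) :
    QuadraticBoundsOnBall L g r (κ - δ) (‖H‖ + δ) (K + δ) := by
  have hball : ∀ {x : E}, ‖x‖ ≤ r → x ∈ closedBall 0 r := mem_closedBall_zero_iff.2
  have hgL : ∀ x ∈ closedBall (0 : E) r, HasGradientAt L (g x) x := fun x _ => hL x
  have hlow : ∀ x ∈ closedBall (0 : E) r, ∀ y ∈ closedBall (0 : E) r,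
      (κ - δ) * ‖y - x‖ ^ 2 ≤ ⟪g y - g x, y - x⟫ :=
    fun x hx y hy => hg.le_inner_sub (fun v => (hH v).1) hx hy
  have h0 : ∀ {x : E}, ‖x‖ ≤ r → (0 : E) ∈ closedBall 0 r :=
    fun hx => mem_closedBall_self ((norm_nonneg _).trans hx)
  refine ⟨fun x hx => hg.norm_le hg0 (h0 hx) (hball hx),
    fun x hx => ?_, fun x y hx hy => ?_, fun x hx => ?_⟩
  · have h := (hlow 0 (h0 hx) x (hball hx)).trans (real_inner_le_norm _ _)
    rw [hg0, sub_zero, sub_zero, sq, ← mul_assoc] at h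
    rcases (norm_nonneg x).eq_or_lt with hx0 | hx0
    · rw [← hx0, mul_zero]; exact norm_nonneg _
    · exact le_of_mul_le_mul_right h hx0
  · exact (convex_closedBall 0 r).le_add_inner_add_of_inner_sub_le hgL
      (fun x hx y hy => hg.inner_sub_le (fun v => (hH v).2) hx hy) (hball hx) (hball hy)
  · have h := (convex_closedBall 0 r).add_inner_add_le_of_le_inner_sub hgL hlow
      (h0 hx) (hball hx)
    rw [hg0, inner_zero_left, sub_zero] at h
    linarith

theorem ContDiff.exists_quadraticBoundsOnBall [CompleteSpace E] {L : E → ℝ} {κ K : ℝ}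
    (hL : ContDiff ℝ 2 L) (hg0 : gradient L 0 = 0)
    (hH : ∀ v, κ * ‖v‖ ^ 2 ≤ ⟪v, fderiv ℝ (gradient L) 0 v⟫ ∧
      ⟪v, fderiv ℝ (gradient L) 0 v⟫ ≤ K * ‖v‖ ^ 2) {δ : ℝ≥0} (hδ : 0 < δ) :
    ∃ r > 0, QuadraticBoundsOnBall L (gradient L) r (κ - δ)
      (‖fderiv ℝ (gradient L) 0‖ + δ) (K + δ) := by
  have hstrict : HasStrictFDerivAt (gradient L) (fderiv ℝ (gradient L) 0) 0 :=
    ((hL.gradient_right (by norm_num)).contDiffAt (x := 0)).hasStrictFDerivAt one_ne_zero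
  obtain ⟨r, hr, hg⟩ := hstrict.exists_approximatesLinearOn_closedBall hδ
  exact ⟨r, hr, hg.quadraticBoundsOnBall
    (fun x => ((hL.differentiable two_ne_zero) x).hasGradientAt) hg0 hH⟩

namespace QuadraticBoundsOnBall

variable {L : E → ℝ} {g : E → E} {r c C K : ℝ}

theorem map_zero (hB : QuadraticBoundsOnBall L g r c C K) (hr : 0 ≤ r) : g 0 = 0 :=
  norm_le_zero_iff.1 (by simpa using hB.norm_le 0 (by simpa using hr))

theorem sub_le (hB : QuadraticBoundsOnBall L g r c C K) {x : E} (hx : ‖x‖ ≤ r) :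
    L x - L 0 ≤ K / 2 * ‖x‖ ^ 2 := by
  have h := hB.le_add_inner 0 x (by simpa using (norm_nonneg x).trans hx) hx
  rw [hB.map_zero ((norm_nonneg x).trans hx), inner_zero_left, sub_zero] at h
  linarith

theorem polyak_lojasiewicz (hB : QuadraticBoundsOnBall L g r c C K) (hc : 0 ≤ c) (hK : 0 ≤ K)
    {x : E} (hx : ‖x‖ ≤ r) : 2 * c ^ 2 * (L x - L 0) ≤ K * ‖g x‖ ^ 2 :=
  calc 2 * c ^ 2 * (L x - L 0) ≤ 2 * c ^ 2 * (K / 2 * ‖x‖ ^ 2) :=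
        mul_le_mul_of_nonneg_left (hB.sub_le hx) (by positivity)
    _ = K * (c * ‖x‖) ^ 2 := by ring
    _ ≤ K * ‖g x‖ ^ 2 :=
        mul_le_mul_of_nonneg_left (pow_le_pow_left₀ (by positivity) (hB.le_norm x hx) 2) hK

end QuadraticBoundsOnBall

end Calculus

section Hadamard

variable {d : ℕ}

theorem had_apply (x y : EuclideanSpace ℝ (Fin d)) (i : Fin d) : had x y i = x i * y i := rfl

theorem sq2_apply (x : EuclideanSpace ℝ (Fin d)) (i : Fin d) : sq2 x i = x i ^ 2 := rfl

theorem regInvSqrt_apply (ε b : ℝ) (x : EuclideanSpace ℝ (Fin d)) (i : Fin d) :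
    regInvSqrt ε b x i = (ε + b * √(x i))⁻¹ := rfl

theorem smul_had (a : ℝ) (x y : EuclideanSpace ℝ (Fin d)) : a • had x y = had (a • x) y := by
  ext i
  simp only [PiLp.smul_apply, had_apply, smul_eq_mul, mul_assoc]

theorem inner_had_self (s v : EuclideanSpace ℝ (Fin d)) :
    ⟪v, had s v⟫ = ∑ i, s i * v i ^ 2 := by
  simp only [PiLp.inner_apply, had_apply, RCLike.inner_apply, conj_trivial]
  exact Finset.sum_congr rfl fun i _ => by ring

theorem sq_norm_had (s v : EuclideanSpace ℝ (Fin d)) :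
    ‖had s v‖ ^ 2 = ∑ i, s i ^ 2 * v i ^ 2 := by
  simp only [EuclideanSpace.real_norm_sq_eq, had_apply, mul_pow]

theorem mul_sq_norm_le_inner_had {s v : EuclideanSpace ℝ (Fin d)} {a : ℝ} (hs : ∀ i, a ≤ s i) :
    a * ‖v‖ ^ 2 ≤ ⟪v, had s v⟫ := by
  rw [inner_had_self, EuclideanSpace.real_norm_sq_eq, Finset.mul_sum]
  exact Finset.sum_le_sum fun i _ => mul_le_mul_of_nonneg_right (hs i) (sq_nonneg _)

theorem sq_norm_had_le_mul_inner {s v : EuclideanSpace ℝ (Fin d)} {b : ℝ}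
    (hs : ∀ i, s i ∈ Icc 0 b) : ‖had s v‖ ^ 2 ≤ b * ⟪v, had s v⟫ := by
  rw [inner_had_self, sq_norm_had, Finset.mul_sum]
  refine Finset.sum_le_sum fun i _ => ?_
  rw [← mul_assoc, sq (s i)]
  exact mul_le_mul_of_nonneg_right
    (mul_le_mul_of_nonneg_right (hs i).2 (hs i).1) (sq_nonneg _)

theorem norm_had_le_s3 {s v : EuclideanSpace ℝ (Fin d)} {b : ℝ} (hb : 0 ≤ b)
    (hs : ∀ i, s i ∈ Icc 0 b) : ‖had s v‖ ≤ b * ‖v‖ := by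
  rcases (norm_nonneg (had s v)).eq_or_lt with h0 | hpos
  · rw [← h0]
    positivity
  have h := (sq_norm_had_le_mul_inner (v := v) hs).trans
    (mul_le_mul_of_nonneg_left (real_inner_le_norm _ _) hb)
  rw [sq, ← mul_assoc] at h
  exact le_of_mul_le_mul_right h hpos

theorem sq_apply_le_sq_norm (x : EuclideanSpace ℝ (Fin d)) (i : Fin d) : x i ^ 2 ≤ ‖x‖ ^ 2 := by
  simpa only [Real.norm_eq_abs, sq_abs] using
    pow_le_pow_left₀ (norm_nonneg _) (PiLp.norm_apply_le x i) 2

theorem norm_sq2_le (x : EuclideanSpace ℝ (Fin d)) : ‖sq2 x‖ ≤ ‖x‖ ^ 2 := by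
  refine pow_le_pow_iff_left₀ (norm_nonneg _) (sq_nonneg _) two_ne_zero |>.1 ?_
  rw [EuclideanSpace.real_norm_sq_eq, EuclideanSpace.real_norm_sq_eq]
  simp only [sq2_apply]
  exact Finset.sum_sq_le_sq_sum_of_nonneg fun i _ => sq_nonneg _

theorem smul_regInvSqrt_apply_mem_Icc {ε γ G : ℝ} (hε : 0 < ε) (hγ : 0 ≤ γ) (hG : 0 ≤ G)
    {m : EuclideanSpace ℝ (Fin d)} {i : Fin d} (hm : m i ≤ G ^ 2) :
    (γ • regInvSqrt ε 1 m) i ∈ Icc (γ / (ε + G)) (γ / ε) := by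
  rw [PiLp.smul_apply, regInvSqrt_apply, one_mul, smul_eq_mul, ← div_eq_mul_inv]
  have hsqrt : √(m i) ≤ G := Real.sqrt_le_iff.2 ⟨hG, hm⟩
  exact ⟨div_le_div_of_nonneg_left hγ (by positivity) (by linarith),
    div_le_div_of_nonneg_left hγ hε (by linarith [Real.sqrt_nonneg (m i)])⟩

end Hadamard

theorem tendsto_zero_of_le_mul_add_geometric {u : ℕ → ℝ} {β ρ W : ℝ} (hu : ∀ n, 0 ≤ u n)
    (hu0 : u 0 = 0) (hβ0 : 0 ≤ β) (hβ1 : β ≤ 1) (hρ0 : 0 ≤ ρ) (hρ1 : ρ < 1) (hW : 0 ≤ W)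
    (h : ∀ n, u (n + 1) ≤ β * u n + (1 - β) * (W * ρ ^ n)) :
    Tendsto u atTop (𝓝 0) := by
  rcases hβ1.eq_or_lt with rfl | hβ1
  · have hzero : ∀ n, u n = 0 := fun n => by
      induction n with
      | zero => exact hu0
      | succ n ih => exact le_antisymm (by simpa [ih] using h n) (hu _)
    exact tendsto_const_nhds.congr fun n => (hzero n).symm
  set τ := max ρ ((1 + β) / 2)
  have hτ0 : 0 ≤ τ := hρ0.trans (le_max_left _ _)
  have hbound : ∀ n, u n ≤ 2 * W * τ ^ n := fun n => by
    induction n with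
    | zero => simp [hu0, hW]
    | succ n ih =>
      have hρτ : W * ρ ^ n ≤ W * τ ^ n :=
        mul_le_mul_of_nonneg_left (pow_le_pow_left₀ hρ0 (le_max_left _ _) n) hW
      have hβτ : W * τ ^ n * (1 + β) ≤ W * τ ^ n * (2 * τ) :=
        mul_le_mul_of_nonneg_left (by linarith [le_max_right ρ ((1 + β) / 2)])
          (mul_nonneg hW (pow_nonneg hτ0 n))
      calc u (n + 1) ≤ β * u n + (1 - β) * (W * ρ ^ n) := h n
        _ ≤ β * (2 * W * τ ^ n) + (1 - β) * (W * τ ^ n) :=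
            add_le_add (mul_le_mul_of_nonneg_left ih hβ0)
              (mul_le_mul_of_nonneg_left hρτ (by linarith))
        _ = W * τ ^ n * (1 + β) := by ring
        _ ≤ 2 * W * τ ^ (n + 1) := by rw [pow_succ]; linarith
  have hτ1 : τ < 1 := max_lt hρ1 (by linarith)
  refine squeeze_zero hu hbound ?_
  simpa using (tendsto_pow_atTop_nhds_zero_of_lt_one hτ0 hτ1).const_mul (2 * W)

theorem ema_sq2_apply_le {d : ℕ} {β G : ℝ} (hβ0 : 0 ≤ β) (hβ1 : β ≤ 1)
    {m v : EuclideanSpace ℝ (Fin d)} (hm : ∀ i, m i ≤ G ^ 2) (hv : ‖v‖ ≤ G) (i : Fin d) :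
    (β • m + (1 - β) • sq2 v) i ≤ G ^ 2 := by
  have hvi : v i ^ 2 ≤ G ^ 2 :=
    (sq_apply_le_sq_norm v i).trans (pow_le_pow_left₀ (norm_nonneg v) hv 2)
  rw [PiLp.add_apply, PiLp.smul_apply, PiLp.smul_apply, sq2_apply, smul_eq_mul, smul_eq_mul]
  nlinarith [mul_le_mul_of_nonneg_left (hm i) hβ0]

theorem tendsto_norm_add_norm_of_sq_norm_le {d : ℕ}
    {g : EuclideanSpace ℝ (Fin d) → EuclideanSpace ℝ (Fin d)} {x m : ℕ → EuclideanSpace ℝ (Fin d)}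
    {β ρ C R : ℝ} (hβ0 : 0 ≤ β) (hβ1 : β ≤ 1) (hρ0 : 0 ≤ ρ) (hρ1 : ρ < 1)
    (hg : ∀ n, ‖g (x n)‖ ≤ C * ‖x n‖) (hx : ∀ n, ‖x n‖ ^ 2 ≤ R ^ 2 * ρ ^ n) (hm0 : m 0 = 0)
    (hm : ∀ n, m (n + 1) = β • m n + (1 - β) • sq2 (g (x n))) :
    Tendsto (fun n => ‖x n‖ + ‖m n‖) atTop (𝓝 0) := by
  have hxlim : Tendsto (fun n => ‖x n‖) atTop (𝓝 0) := by
    refine squeeze_zero (fun n => norm_nonneg _) (fun n => Real.le_sqrt_of_sq_le (hx n)) ?_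
    simpa using ((tendsto_pow_atTop_nhds_zero_of_lt_one hρ0 hρ1).const_mul (R ^ 2)).sqrt
  have hmn : ∀ n, ‖m (n + 1)‖ ≤ β * ‖m n‖ + (1 - β) * (C ^ 2 * R ^ 2 * ρ ^ n) := fun n => by
    have hsq2 : ‖sq2 (g (x n))‖ ≤ C ^ 2 * R ^ 2 * ρ ^ n :=
      calc ‖sq2 (g (x n))‖ ≤ ‖g (x n)‖ ^ 2 := norm_sq2_le _
        _ ≤ (C * ‖x n‖) ^ 2 := pow_le_pow_left₀ (norm_nonneg _) (hg n) 2
        _ ≤ C ^ 2 * (R ^ 2 * ρ ^ n) := by rw [mul_pow]; gcongr; exact hx n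
        _ = C ^ 2 * R ^ 2 * ρ ^ n := by ring
    rw [hm n]
    refine (norm_add_le _ _).trans ?_
    rw [norm_smul, norm_smul, Real.norm_of_nonneg hβ0, Real.norm_of_nonneg (sub_nonneg.2 hβ1)]
    gcongr
  have hmlim := tendsto_zero_of_le_mul_add_geometric (fun n => norm_nonneg (m n))
    (by rw [hm0, norm_zero]) hβ0 hβ1 hρ0 hρ1 (by positivity) hmn
  simpa using hxlim.add hmlim

namespace QuadraticBoundsOnBall

variable {d : ℕ} {L : EuclideanSpace ℝ (Fin d) → ℝ}
  {g : EuclideanSpace ℝ (Fin d) → EuclideanSpace ℝ (Fin d)} {r c C K : ℝ}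

theorem map_sub_had_le (hB : QuadraticBoundsOnBall L g r c C K) (hK : 0 ≤ K)
    {x s : EuclideanSpace ℝ (Fin d)} {a b : ℝ} (ha : 0 ≤ a) (hs : ∀ i, s i ∈ Icc a b)
    (hbK : b * K ≤ 2) (hx : ‖x‖ ≤ r) (hy : ‖x - had s (g x)‖ ≤ r) :
    L (x - had s (g x)) ≤ L x - (1 - b * K / 2) * a * ‖g x‖ ^ 2 := by
  have hs0 : ∀ i, s i ∈ Icc 0 b := fun i => ⟨ha.trans (hs i).1, (hs i).2⟩
  have hdesc := hB.le_add_inner x _ hx hy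
  rw [sub_sub_cancel_left, inner_neg_right, norm_neg] at hdesc
  have hsq := mul_le_mul_of_nonneg_left (sq_norm_had_le_mul_inner (v := g x) hs0)
    (by positivity : 0 ≤ K / 2)
  have hlow := mul_le_mul_of_nonneg_left (mul_sq_norm_le_inner_had (v := g x) fun i => (hs i).1)
    (by linarith : 0 ≤ 1 - b * K / 2)
  nlinarith

theorem rmsprop_step (hB : QuadraticBoundsOnBall L g r c C K) (hC : 0 ≤ C) (hK : 0 ≤ K)
    {ε γ R : ℝ} (hε : 0 < ε) (hγ : 0 ≤ γ) (hγK : γ * K ≤ 2 * ε) (hR : R * (1 + γ / ε * C) ≤ r)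
    {x m : EuclideanSpace ℝ (Fin d)} (hx : ‖x‖ ≤ R) (hm : ∀ i, m i ≤ (C * R) ^ 2) :
    ‖x - γ • had (regInvSqrt ε 1 m) (g x)‖ ≤ r ∧
      L (x - γ • had (regInvSqrt ε 1 m) (g x)) ≤
        L x - (1 - γ / ε * K / 2) * (γ / (ε + C * R)) * ‖g x‖ ^ 2 := by
  have hR0 : 0 ≤ R := (norm_nonneg x).trans hx
  have hxr : ‖x‖ ≤ r := hx.trans (le_trans (by nlinarith [mul_nonneg (div_nonneg hγ hε.le) hC])
    hR)
  have hs := fun i => smul_regInvSqrt_apply_mem_Icc hε hγ (mul_nonneg hC hR0) (hm i)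
  have hs0 : ∀ i, (γ • regInvSqrt ε 1 m) i ∈ Icc 0 (γ / ε) :=
    fun i => ⟨(by positivity : 0 ≤ γ / (ε + C * R)).trans (hs i).1, (hs i).2⟩
  rw [smul_had]
  have hy : ‖x - had (γ • regInvSqrt ε 1 m) (g x)‖ ≤ r :=
    calc _ ≤ ‖x‖ + γ / ε * ‖g x‖ := norm_sub_le_of_le le_rfl (norm_had_le_s3 (by positivity) hs0)
      _ ≤ R + γ / ε * (C * R) := by
          gcongr
          exact (hB.norm_le x hxr).trans (mul_le_mul_of_nonneg_left hx hC)
      _ = R * (1 + γ / ε * C) := by ring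
      _ ≤ r := hR
  refine ⟨hy, hB.map_sub_had_le hK (by positivity) hs ?_ hxr hy⟩
  rw [div_mul_eq_mul_div, div_le_iff₀ hε]
  linarith

theorem rmsprop_invariant (hB : QuadraticBoundsOnBall L g r c C K) (hc : 0 < c) (hC : 0 ≤ C)
    (hK : 0 < K) {ε γ β R ρ : ℝ} (hε : 0 < ε) (hγ : 0 ≤ γ) (hγK : γ * K ≤ 2 * ε)
    (hβ0 : 0 ≤ β) (hβ1 : β ≤ 1) (hR : R * (1 + γ / ε * C) ≤ r) (hρ0 : 0 ≤ ρ) (hρ1 : ρ ≤ 1)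
    (hρ : 1 - 2 * c ^ 2 * ((1 - γ / ε * K / 2) * (γ / (ε + C * R))) / K ≤ ρ)
    {x m : ℕ → EuclideanSpace ℝ (Fin d)} (hx0 : ‖x 0‖ ≤ R) (hV0 : K * ‖x 0‖ ^ 2 ≤ c * R ^ 2)
    (hm0 : m 0 = 0) (hm : ∀ n, m (n + 1) = β • m n + (1 - β) • sq2 (g (x n)))
    (hx : ∀ n, x (n + 1) = x n - γ • had (regInvSqrt ε 1 (m (n + 1))) (g (x n))) (n : ℕ) :
    (∀ i, m n i ≤ (C * R) ^ 2) ∧ ‖x n‖ ≤ R ∧ L (x n) - L 0 ≤ ρ ^ n * (c / 2 * R ^ 2) := by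
  have hR0 : 0 ≤ R := (norm_nonneg _).trans hx0
  have hRr : R ≤ r := le_trans (by nlinarith [mul_nonneg (div_nonneg hγ hε.le) hC]) hR
  set α := (1 - γ / ε * K / 2) * (γ / (ε + C * R)) with hα_def
  have hα : 0 ≤ α := by
    refine mul_nonneg ?_ (by positivity)
    rw [div_mul_eq_mul_div, sub_nonneg, div_le_one two_pos, div_le_iff₀ hε]
    linarith
  induction n with
  | zero =>
    refine ⟨fun i => by simpa [hm0] using sq_nonneg (C * R), hx0, ?_⟩
    have := hB.sub_le (hx0.trans hRr)
    rw [pow_zero, one_mul]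
    nlinarith
  | succ n ih =>
    obtain ⟨hmn, hxn, hVn⟩ := ih
    have hxr := hxn.trans hRr
    have hm1 : ∀ i, m (n + 1) i ≤ (C * R) ^ 2 := fun i => by
      rw [hm n]
      exact ema_sq2_apply_le hβ0 hβ1 hmn
        ((hB.norm_le _ hxr).trans (mul_le_mul_of_nonneg_left hxn hC)) i
    obtain ⟨hx1r, hdesc⟩ := hB.rmsprop_step hC hK.le hε hγ hγK hR hxn hm1
    rw [← hx n] at hx1r
    rw [← hx n, ← hα_def] at hdesc
    have hPL := hB.polyak_lojasiewicz hc.le hK.le hxr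
    have hVn0 : 0 ≤ L (x n) - L 0 :=
      (mul_nonneg (by positivity) (sq_nonneg _)).trans (hB.le_sub _ hxr)
    have hPLα : 2 * c ^ 2 * α / K * (L (x n) - L 0) ≤ α * ‖g (x n)‖ ^ 2 := by
      rw [div_mul_eq_mul_div, div_le_iff₀ hK]
      nlinarith [mul_le_mul_of_nonneg_left hPL hα]
    have hcontr : L (x (n + 1)) - L 0 ≤ ρ * (L (x n) - L 0) := by
      nlinarith [mul_le_mul_of_nonneg_right hρ hVn0]
    have hV1 : L (x (n + 1)) - L 0 ≤ ρ ^ (n + 1) * (c / 2 * R ^ 2) := by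
      rw [pow_succ', mul_assoc]
      exact hcontr.trans (mul_le_mul_of_nonneg_left hVn hρ0)
    refine ⟨hm1, ?_, hV1⟩
    have hpow : ρ ^ (n + 1) ≤ 1 := pow_le_one₀ hρ0 hρ1
    have hgrowth := hB.le_sub _ hx1r
    refine pow_le_pow_iff_left₀ (norm_nonneg _) hR0 two_ne_zero |>.1 ?_
    nlinarith [mul_le_mul_of_nonneg_right hpow (by positivity : 0 ≤ c / 2 * R ^ 2)]

theorem exists_tendsto_rmsprop (hB : QuadraticBoundsOnBall L g r c C K) (hr : 0 < r)
    (hc : 0 < c) (hcK : c ≤ K) (hC : 0 ≤ C) {ε γ β : ℝ} (hε : 0 < ε) (hγ : 0 < γ)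
    (hγK : γ * K < 2 * ε) (hβ0 : 0 ≤ β) (hβ1 : β ≤ 1) :
    ∃ η > 0, ∀ x m : ℕ → EuclideanSpace ℝ (Fin d), ‖x 0‖ < η → m 0 = 0 →
      (∀ n, m (n + 1) = β • m n + (1 - β) • sq2 (g (x n))) →
      (∀ n, x (n + 1) = x n - γ • had (regInvSqrt ε 1 (m (n + 1))) (g (x n))) →
      Tendsto (fun n => ‖x n‖ + ‖m n‖) atTop (𝓝 0) := by
  have hK : 0 < K := hc.trans_le hcK
  -- A step from the ball of radius `R` moves by at most `γ / ε * C * R`, so it stays within `r`.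
  set R := r / (1 + γ / ε * C)
  have hRpos : 0 < R := by positivity
  have hR : R * (1 + γ / ε * C) = r := div_mul_cancel₀ r (by positivity)
  set α := (1 - γ / ε * K / 2) * (γ / (ε + C * R))
  have hα : 0 < α := by
    refine mul_pos ?_ (by positivity)
    rw [div_mul_eq_mul_div, sub_pos, div_lt_one two_pos, div_lt_iff₀ hε]
    linarith
  set ρ := max (1 - 2 * c ^ 2 * α / K) 0
  have hρ0 : 0 ≤ ρ := le_max_right _ _
  have hρ1 : ρ < 1 := max_lt (sub_lt_self 1 (by positivity)) one_pos
  -- `η` is chosen so that `L (x 0) - L 0 ≤ K / 2 * ‖x 0‖ ^ 2 ≤ c / 2 * R ^ 2`.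
  refine ⟨R * √(c / K), by positivity, fun x m hx0 hm0 hm hx => ?_⟩
  have hx0R : ‖x 0‖ ≤ R := hx0.le.trans
    (mul_le_of_le_one_right hRpos.le (Real.sqrt_le_one.2 ((div_le_one hK).2 hcK)))
  have hV0 : K * ‖x 0‖ ^ 2 ≤ c * R ^ 2 := by
    have h := pow_le_pow_left₀ (norm_nonneg _) hx0.le 2
    rw [mul_pow, Real.sq_sqrt (by positivity)] at h
    calc K * ‖x 0‖ ^ 2 ≤ K * (R ^ 2 * (c / K)) := mul_le_mul_of_nonneg_left h hK.le
      _ = c * R ^ 2 := by field_simp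
  have hinv := hB.rmsprop_invariant hc hC hK hε hγ.le hγK.le hβ0 hβ1 hR.le hρ0 hρ1.le
    (le_max_left _ _) hx0R hV0 hm0 hm hx
  have hRr : R ≤ r := hR ▸ le_mul_of_one_le_right hRpos.le (by simp; positivity)
  have hxr : ∀ n, ‖x n‖ ≤ r := fun n => (hinv n).2.1.trans hRr
  refine tendsto_norm_add_norm_of_sq_norm_le (R := R) hβ0 hβ1 hρ0 hρ1
    (fun n => hB.norm_le _ (hxr n)) (fun n => ?_) hm0 hm
  have hgrowth := (hB.le_sub _ (hxr n)).trans (hinv n).2.2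
  rw [mul_left_comm, mul_comm (ρ ^ n)] at hgrowth
  exact le_of_mul_le_mul_left hgrowth (half_pos hc)

end QuadraticBoundsOnBall

theorem stmt3_general (d : ℕ) (ε κ K γ β : ℝ)
    (hε : 0 < ε) (hκ : 0 < κ) (hκK : κ < K)
    (hγ : 0 < γ) (hγ' : γ < 2 * ε / K) (hβ0 : 0 ≤ β) (hβ1 : β ≤ 1)
    (L : EuclideanSpace ℝ (Fin d) → ℝ) (hL : ContDiff ℝ 2 L)
    (hgrad0 : gradient L 0 = 0)
    -- κ I_d ⪯ (Hess L)(0) ⪯ K I_d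
    (hHess : ∀ v : EuclideanSpace ℝ (Fin d),
      κ * ‖v‖ ^ 2 ≤ ⟪v, fderiv ℝ (gradient L) 0 v⟫ ∧
      ⟪v, fderiv ℝ (gradient L) 0 v⟫ ≤ K * ‖v‖ ^ 2)
    (M Θ : EuclideanSpace ℝ (Fin d) → ℕ → EuclideanSpace ℝ (Fin d))
    (hΘ0 : ∀ θ, Θ θ 0 = θ) (hM0 : ∀ θ, M θ 0 = 0)
    (hMrec : ∀ θ, ∀ n : ℕ,
      M θ (n + 1) = β • M θ n + (1 - β) • sq2 (gradient L (Θ θ n)))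
    (hΘrec : ∀ θ, ∀ n : ℕ,
      Θ θ (n + 1) = Θ θ n - γ • had (regInvSqrt ε 1 (M θ (n + 1))) (gradient L (Θ θ n))) :
    ∃ η : ℝ, 0 < η ∧ ∀ θ ∈ Metric.ball (0 : EuclideanSpace ℝ (Fin d)) η,
      Tendsto (fun n => ‖Θ θ n‖ + ‖M θ n‖) atTop (nhds 0) := by
  have hgap : 0 < 2 * ε / γ - K := by
    rw [sub_pos, lt_div_iff₀ hγ, mul_comm]
    rwa [lt_div_iff₀ (hκ.trans hκK)] at hγ'
  obtain ⟨δ, hδ, hδκ, hδK⟩ : ∃ δ : ℝ, 0 < δ ∧ δ < κ ∧ δ < 2 * ε / γ - K :=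
    ⟨min κ (2 * ε / γ - K) / 2, by positivity,
      by linarith [min_le_left κ (2 * ε / γ - K), lt_min hκ hgap],
      by linarith [min_le_right κ (2 * ε / γ - K), lt_min hκ hgap]⟩
  lift δ to ℝ≥0 using hδ.le
  have hγK : γ * (K + δ) < 2 * ε := by
    rw [← lt_div_iff₀' hγ]
    linarith
  obtain ⟨r, hr, hB⟩ := hL.exists_quadraticBoundsOnBall hgrad0 hHess hδ
  obtain ⟨η, hη, hconv⟩ := hB.exists_tendsto_rmsprop hr (sub_pos.2 hδκ) (by linarith)
    (by positivity) hε hγ hγK hβ0 hβ1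
  exact ⟨η, hη, fun θ hθ => hconv (Θ θ) (M θ) (by simpa [hΘ0] using hθ) (hM0 θ) (hMrec θ)
    (hΘrec θ)⟩

/-- Local convergence of RMSprop. -/
theorem stmt3 (d : ℕ) (hd : 0 < d) (ε κ K γ β : ℝ)
    (hε : 0 < ε) (hκ : 0 < κ) (hκK : κ < K)
    (hγ : 0 < γ) (hγ' : γ < 2 * ε / K) (hβ0 : 0 ≤ β) (hβ1 : β ≤ 1)
    (L : EuclideanSpace ℝ (Fin d) → ℝ) (hL : ContDiff ℝ 2 L)
    (hgrad0 : gradient L 0 = 0)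
    -- κ I_d ⪯ (Hess L)(0) ⪯ K I_d
    (hHess : ∀ v : EuclideanSpace ℝ (Fin d),
      κ * ‖v‖ ^ 2 ≤ ⟪v, fderiv ℝ (gradient L) 0 v⟫ ∧
      ⟪v, fderiv ℝ (gradient L) 0 v⟫ ≤ K * ‖v‖ ^ 2)
    (M Θ : EuclideanSpace ℝ (Fin d) → ℕ → EuclideanSpace ℝ (Fin d))
    (hΘ0 : ∀ θ, Θ θ 0 = θ) (hM0 : ∀ θ, M θ 0 = 0)
    (hMrec : ∀ θ, ∀ n : ℕ,
      M θ (n + 1) = β • M θ n + (1 - β) • sq2 (gradient L (Θ θ n)))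
    (hΘrec : ∀ θ, ∀ n : ℕ,
      Θ θ (n + 1) = Θ θ n - γ • had (regInvSqrt ε 1 (M θ (n + 1))) (gradient L (Θ θ n))) :
    ∃ η : ℝ, 0 < η ∧ ∀ θ ∈ Metric.ball (0 : EuclideanSpace ℝ (Fin d)) η,
      Tendsto (fun n => ‖Θ θ n‖ + ‖M θ n‖) atTop (nhds 0) :=
  stmt3_general d ε κ K γ β hε hκ hκK hγ hγ' hβ0 hβ1 L hL hgrad0 hHess M Θ hΘ0 hM0 hMrec hΘrec
end
end

section
/- Let d ∈ ℕ, δ, ε, κ ∈ (0,∞), K ∈ (κ,∞), γ ∈ (0, 2ε/K), β ∈ [0,1], let L : ℝ^d → ℝ be twice continuously differentiable with (∇L)(0) = 0 and κ I_d ⪯ (Hess L)(0) ⪯ K I_d, and for every θ ∈ ℝ^d let 𝕄^θ, Θ^θ : ℕ_0 → ℝ^d satisfy Θ_0^θ = θ, 𝕄_0^θ = 0, and for all n ∈ ℕ: 𝕄_n^θ = β 𝕄_{n−1}^θ + (1−β)(∇L(Θ_{n−1}^θ))^{⊙2} and Θ_n^θ = Θ_{n−1}^θ − γ (ε𝟙_d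 + (𝕄_n^θ)^{⊙1/2})^{⊙(−1)} ⊙ (∇L)(Θ_{n−1}^θ). Then there exist η, C > 0 such that for all θ ∈ B_η(0) and all n ∈ ℕ it holds that ‖Θ_n^θ‖ ≤ C · (max{|1 − γκ/ε|, |1 − γK/ε|} + δ)^n. -/
/-!
Let `A` be the Hessian of `L` at `0` and `t = γ / ε`. Since `A` is symmetric with
`κ ≤ A ≤ K`, the gradient step `v ↦ v - t • A v` has operator norm at most
`ρ = max |1 - tκ| |1 - tK|`, which is `< 1` because `tK < 2`. One RMSprop step from `x`
differs from this linear step by two errors: `∇L x - A x = o(‖x‖)`, and the preconditioner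
`(ε + √m)⁻¹` differs from `ε⁻¹` by at most `√m / ε²`. The second moment `m` is a convex
combination of past squared gradients, so `√m ≤ Λη` as long as the iterates stay in the ball of
radius `η` on which `‖∇L x‖ ≤ Λ‖x‖`. Choosing `η` small makes both errors `≤ δ' / 2 · ‖x‖`,
hence `‖Θₙ‖ ≤ (ρ + δ')ⁿ ‖θ‖` by induction, with `ρ + δ' ≤ 1` keeping the iterates in the ball.
-/

open Filter
open scoped Topology RealInnerProductSpace

noncomputable section

theorem max_abs_one_sub_lt_one {a b : ℝ} (ha : 0 < a) (hab : a ≤ b) (hb : b < 2) :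
    max |1 - a| |1 - b| < 1 :=
  max_lt (abs_lt.2 ⟨by linarith, by linarith⟩) (abs_lt.2 ⟨by linarith, by linarith⟩)

theorem abs_inv_add_sub_inv_le {ε r s : ℝ} (hε : 0 < ε) (hr : 0 ≤ r) (hrs : r ≤ s) :
    |(ε + r)⁻¹ - ε⁻¹| ≤ s / ε ^ 2 := by
  have hεr : 0 < ε + r := by linarith
  have hdiff : ε⁻¹ - (ε + r)⁻¹ = r / (ε * (ε + r)) := by
    field_simp
    ring
  rw [abs_sub_comm, hdiff, abs_of_nonneg (by positivity), sq]
  exact div_le_div₀ (hr.trans hrs) hrs (by positivity)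
    (mul_le_mul_of_nonneg_left (by linarith) hε.le)

namespace ContinuousLinearMap

variable {E : Type*} [NormedAddCommGroup E] [InnerProductSpace ℝ E]

theorem norm_le_max_abs_of_inner_self_bounds {T : E →L[ℝ] E}
    (hT : (T : E →ₗ[ℝ] E).IsSymmetric) {a b : ℝ}
    (h : ∀ v, a * ‖v‖ ^ 2 ≤ ⟪v, T v⟫ ∧ ⟪v, T v⟫ ≤ b * ‖v‖ ^ 2) :
    ‖T‖ ≤ max |a| |b| := by
  rw [T.norm_eq_iSup_rayleighQuotient hT]
  refine ciSup_le fun v => ?_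
  rcases eq_or_ne v 0 with rfl | hv
  · simp
  have hv2 : 0 < ‖v‖ ^ 2 := by positivity
  have hq : T.rayleighQuotient v = ⟪v, T v⟫ / ‖v‖ ^ 2 := by
    rw [rayleighQuotient, reApplyInnerSelf_apply, real_inner_comm]
    rfl
  rw [hq]
  exact abs_le_max_abs_abs ((le_div_iff₀ hv2).2 (h v).1) ((div_le_iff₀ hv2).2 (h v).2)

theorem norm_sub_smul_apply_le {A : E →L[ℝ] E} (hA : (A : E →ₗ[ℝ] E).IsSymmetric)
    {a b t : ℝ} (ht : 0 ≤ t)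
    (h : ∀ v, a * ‖v‖ ^ 2 ≤ ⟪v, A v⟫ ∧ ⟪v, A v⟫ ≤ b * ‖v‖ ^ 2) (v : E) :
    ‖v - t • A v‖ ≤ max |1 - t * a| |1 - t * b| * ‖v‖ := by
  set T := ContinuousLinearMap.id ℝ E - t • A
  have hT : (T : E →ₗ[ℝ] E).IsSymmetric := fun u w => by
    simp only [T, coe_coe, sub_apply, smul_apply, id_apply, inner_sub_left, inner_sub_right,
      real_inner_smul_left, real_inner_smul_right]
    rw [← coe_coe, hA u w, coe_coe]
  have hTv : ∀ u, ⟪u, T u⟫ = ‖u‖ ^ 2 - t * ⟪u, A u⟫ := fun u => by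
    simp [T, inner_sub_right, real_inner_smul_right]
  have hT_norm : ‖T‖ ≤ max |1 - t * b| |1 - t * a| :=
    norm_le_max_abs_of_inner_self_bounds hT fun u => by
      rw [hTv]
      constructor <;> nlinarith [mul_le_mul_of_nonneg_left (h u).1 ht,
        mul_le_mul_of_nonneg_left (h u).2 ht]
  rw [max_comm] at hT_norm
  exact (T.le_opNorm v).trans (mul_le_mul_of_nonneg_right hT_norm (norm_nonneg v))

end ContinuousLinearMap

theorem HasFDerivAt.exists_norm_sub_le {E F : Type*} [NormedAddCommGroup E] [NormedSpace ℝ E]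
    [NormedAddCommGroup F] [NormedSpace ℝ F] {f : E → F} {f' : E →L[ℝ] F}
    (hf : HasFDerivAt f f' 0) (h0 : f 0 = 0) {c : ℝ} (hc : 0 < c) :
    ∃ η > 0, ∀ x, ‖x‖ < η → ‖f x - f' x‖ ≤ c * ‖x‖ := by
  have hsmall := hf.isLittleO.def hc
  simp only [h0, sub_zero] at hsmall
  obtain ⟨η, hη, h⟩ := Metric.eventually_nhds_iff.1 hsmall
  exact ⟨η, hη, fun x hx => h (by rwa [dist_zero_right])⟩

section Gradient

variable {E : Type*} [NormedAddCommGroup E] [InnerProductSpace ℝ E] [CompleteSpace E]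
  {L : E → ℝ}

-- Over `ℝ` the conjugate-linear `toDual` is definitionally linear.
theorem gradient_eq_toDual_symm_comp_fderiv :
    gradient L = ((InnerProductSpace.toDual ℝ E).symm.toContinuousLinearEquiv :
      StrongDual ℝ E ≃L[ℝ] E) ∘ fderiv ℝ L :=
  rfl

theorem inner_fderiv_gradient_apply (x u v : E) :
    ⟪u, fderiv ℝ (gradient L) x v⟫ = fderiv ℝ (fderiv ℝ L) x v u := by
  rw [gradient_eq_toDual_symm_comp_fderiv, ContinuousLinearEquiv.comp_fderiv, real_inner_comm]
  exact InnerProductSpace.toDual_symm_apply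

theorem ContDiff.isSymmetric_fderiv_gradient (hL : ContDiff ℝ 2 L) (x : E) :
    (fderiv ℝ (gradient L) x : E →ₗ[ℝ] E).IsSymmetric := fun u v => by
  have hsymm := (hL.contDiffAt (x := x)).isSymmSndFDerivAt (by simp)
  simp only [ContinuousLinearMap.coe_coe]
  rw [real_inner_comm, inner_fderiv_gradient_apply, inner_fderiv_gradient_apply, hsymm]

theorem ContDiff.differentiable_gradient (hL : ContDiff ℝ 2 L) :
    Differentiable ℝ (gradient L) := by
  rw [gradient_eq_toDual_symm_comp_fderiv]
  exact ContinuousLinearEquiv.differentiable _ |>.comp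
    ((hL.fderiv_right (m := 1) (by norm_num)).differentiable one_ne_zero)

end Gradient

theorem EuclideanSpace.norm_le_of_abs_apply_le {ι : Type*} [Fintype ι]
    {x y : EuclideanSpace ℝ ι} {c : ℝ} (hc : 0 ≤ c) (h : ∀ i, |x i| ≤ c * |y i|) :
    ‖x‖ ≤ c * ‖y‖ := by
  refine (pow_le_pow_iff_left₀ (norm_nonneg x) (by positivity) two_ne_zero).1 ?_
  rw [mul_pow, EuclideanSpace.norm_sq_eq, EuclideanSpace.norm_sq_eq, Finset.mul_sum]
  refine Finset.sum_le_sum fun i _ => ?_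
  rw [Real.norm_eq_abs, Real.norm_eq_abs, ← mul_pow]
  exact pow_le_pow_left₀ (abs_nonneg _) (h i) 2

section RMSprop

variable {d : ℕ}

theorem norm_had_regInvSqrt_sub_le {ε s : ℝ} (hε : 0 < ε) (hs : 0 ≤ s)
    {m : EuclideanSpace ℝ (Fin d)} (hm : ∀ i, √(m i) ≤ s) (g : EuclideanSpace ℝ (Fin d)) :
    ‖had (regInvSqrt ε 1 m) g - ε⁻¹ • g‖ ≤ s / ε ^ 2 * ‖g‖ := by
  refine EuclideanSpace.norm_le_of_abs_apply_le (by positivity) fun i => ?_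
  simp only [had, regInvSqrt, one_mul, PiLp.sub_apply, PiLp.smul_apply, smul_eq_mul, ← sub_mul,
    abs_mul]
  exact mul_le_mul_of_nonneg_right
    (abs_inv_add_sub_inv_le hε (Real.sqrt_nonneg _) (hm i)) (abs_nonneg _)

theorem smul_add_smul_sq2_apply_le {β s : ℝ} (hβ0 : 0 ≤ β) (hβ1 : β ≤ 1)
    {m g : EuclideanSpace ℝ (Fin d)} (hm : ∀ i, m i ≤ s ^ 2) (hg : ‖g‖ ≤ s) (i : Fin d) :
    (β • m + (1 - β) • sq2 g) i ≤ s ^ 2 := by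
  have hgi : g i ^ 2 ≤ s ^ 2 := by
    rw [← sq_abs]
    exact pow_le_pow_left₀ (abs_nonneg _) ((PiLp.norm_apply_le g i).trans hg) 2
  simp only [sq2, PiLp.add_apply, PiLp.smul_apply, smul_eq_mul]
  nlinarith [mul_le_mul_of_nonneg_left (hm i) hβ0,
    mul_le_mul_of_nonneg_left hgi (sub_nonneg.2 hβ1)]

theorem norm_rmsprop_step_le {ε γ ρ c Λ s : ℝ} (hε : 0 < ε) (hγ : 0 ≤ γ) (hs : 0 ≤ s)
    {A : EuclideanSpace ℝ (Fin d) →L[ℝ] EuclideanSpace ℝ (Fin d)}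
    (hA : ∀ v, ‖v - (γ / ε) • A v‖ ≤ ρ * ‖v‖) {x g m : EuclideanSpace ℝ (Fin d)}
    (hgA : ‖g - A x‖ ≤ c * ‖x‖) (hg : ‖g‖ ≤ Λ * ‖x‖) (hm : ∀ i, √(m i) ≤ s) :
    ‖x - γ • had (regInvSqrt ε 1 m) g‖ ≤ (ρ + γ / ε * c + γ * (s / ε ^ 2) * Λ) * ‖x‖ := by
  set P := had (regInvSqrt ε 1 m) g
  have hdecomp : x - γ • P = (x - (γ / ε) • A x) - (γ / ε) • (g - A x) - γ • (P - ε⁻¹ • g) := by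
    module
  have hP : ‖P - ε⁻¹ • g‖ ≤ s / ε ^ 2 * (Λ * ‖x‖) :=
    (norm_had_regInvSqrt_sub_le hε hs hm g).trans (by gcongr)
  calc ‖x - γ • P‖
      ≤ ‖x - (γ / ε) • A x‖ + γ / ε * ‖g - A x‖ + γ * ‖P - ε⁻¹ • g‖ := by
        rw [hdecomp]
        refine (norm_sub_le _ _).trans (add_le_add ((norm_sub_le _ _).trans_eq ?_) ?_) <;>
          rw [norm_smul, Real.norm_of_nonneg (by positivity)]
    _ ≤ ρ * ‖x‖ + γ / ε * (c * ‖x‖) + γ * (s / ε ^ 2 * (Λ * ‖x‖)) := by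
        gcongr
        exact hA x
    _ = (ρ + γ / ε * c + γ * (s / ε ^ 2) * Λ) * ‖x‖ := by ring

theorem rmsprop_norm_le_pow {ε γ β ρ c Λ η q : ℝ} (hε : 0 < ε) (hγ : 0 ≤ γ)
    (hβ0 : 0 ≤ β) (hβ1 : β ≤ 1) (hΛ : 0 ≤ Λ) (hq0 : 0 ≤ q) (hq1 : q ≤ 1)
    (hq : ρ + γ / ε * c + γ * (Λ * η / ε ^ 2) * Λ ≤ q)
    {A : EuclideanSpace ℝ (Fin d) →L[ℝ] EuclideanSpace ℝ (Fin d)}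
    (hA : ∀ v, ‖v - (γ / ε) • A v‖ ≤ ρ * ‖v‖)
    {G : EuclideanSpace ℝ (Fin d) → EuclideanSpace ℝ (Fin d)}
    (hGA : ∀ x, ‖x‖ < η → ‖G x - A x‖ ≤ c * ‖x‖) (hG : ∀ x, ‖x‖ < η → ‖G x‖ ≤ Λ * ‖x‖)
    {θ : EuclideanSpace ℝ (Fin d)} (hθ : ‖θ‖ < η) {M Θ : ℕ → EuclideanSpace ℝ (Fin d)}
    (hΘ0 : Θ 0 = θ) (hM0 : M 0 = 0)
    (hMrec : ∀ n, M (n + 1) = β • M n + (1 - β) • sq2 (G (Θ n)))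
    (hΘrec : ∀ n, Θ (n + 1) = Θ n - γ • had (regInvSqrt ε 1 (M (n + 1))) (G (Θ n))) (n : ℕ) :
    ‖Θ n‖ ≤ q ^ n * ‖θ‖ := by
  have hη : 0 ≤ η := (norm_nonneg θ).trans hθ.le
  suffices h : ∀ n, ‖Θ n‖ ≤ q ^ n * ‖θ‖ ∧ ∀ i, M n i ≤ (Λ * η) ^ 2 from (h n).1
  intro n
  induction n with
  | zero => simp [hΘ0, hM0, sq_nonneg]
  | succ n ih =>
    obtain ⟨hΘn, hMn⟩ := ih
    have hΘn_lt : ‖Θ n‖ < η :=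
      (hΘn.trans (mul_le_of_le_one_left (norm_nonneg θ) (pow_le_one₀ hq0 hq1))).trans_lt hθ
    have hGn : ‖G (Θ n)‖ ≤ Λ * ‖Θ n‖ := hG _ hΘn_lt
    have hMn' : ∀ i, M (n + 1) i ≤ (Λ * η) ^ 2 := fun i => by
      rw [hMrec]
      exact smul_add_smul_sq2_apply_le hβ0 hβ1 hMn (hGn.trans (by gcongr)) i
    have hsqrt : ∀ i, √(M (n + 1) i) ≤ Λ * η := fun i =>
      Real.sqrt_le_sqrt (hMn' i) |>.trans_eq (Real.sqrt_sq (by positivity))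
    refine ⟨?_, hMn'⟩
    calc ‖Θ (n + 1)‖ ≤ (ρ + γ / ε * c + γ * (Λ * η / ε ^ 2) * Λ) * ‖Θ n‖ := by
          rw [hΘrec]
          exact norm_rmsprop_step_le hε hγ (by positivity) hA (hGA _ hΘn_lt) hGn hsqrt
      _ ≤ q * (q ^ n * ‖θ‖) := by gcongr
      _ = q ^ (n + 1) * ‖θ‖ := by ring

theorem exists_rmsprop_norm_le_pow {ε γ β ρ δ : ℝ} (hε : 0 < ε) (hγ : 0 < γ) (hβ0 : 0 ≤ β)
    (hβ1 : β ≤ 1) (hδ : 0 < δ) (hρ0 : 0 ≤ ρ) (hρ1 : ρ < 1)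
    {A : EuclideanSpace ℝ (Fin d) →L[ℝ] EuclideanSpace ℝ (Fin d)}
    (hA : ∀ v, ‖v - (γ / ε) • A v‖ ≤ ρ * ‖v‖)
    {G : EuclideanSpace ℝ (Fin d) → EuclideanSpace ℝ (Fin d)}
    (hGA : HasFDerivAt G A 0) (hG0 : G 0 = 0) :
    ∃ η > 0, ∀ θ, ‖θ‖ < η → ∀ M Θ : ℕ → EuclideanSpace ℝ (Fin d), Θ 0 = θ → M 0 = 0 →
      (∀ n, M (n + 1) = β • M n + (1 - β) • sq2 (G (Θ n))) →
      (∀ n, Θ (n + 1) = Θ n - γ • had (regInvSqrt ε 1 (M (n + 1))) (G (Θ n))) →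
      ∀ n, ‖Θ n‖ ≤ (ρ + δ) ^ n * ‖θ‖ := by
  set δ' := min δ (1 - ρ)
  have hδ' : 0 < δ' := lt_min hδ (by linarith)
  set c := δ' * ε / (2 * γ)
  obtain ⟨η₁, hη₁, hlin⟩ := hGA.exists_norm_sub_le hG0 (by positivity : 0 < c)
  set Λ := ‖A‖ + c
  have hΛ : 0 < Λ := add_pos_of_nonneg_of_pos (norm_nonneg A) (by positivity)
  have hG : ∀ x, ‖x‖ < η₁ → ‖G x‖ ≤ Λ * ‖x‖ := fun x hx => by
    nlinarith [norm_le_norm_add_norm_sub' (G x) (A x), A.le_opNorm x, hlin x hx]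
  set η := min η₁ (δ' * ε ^ 2 / (2 * γ * Λ ^ 2))
  have hq : ρ + γ / ε * c + γ * (Λ * η / ε ^ 2) * Λ ≤ ρ + δ' := by
    have hc : γ / ε * c = δ' / 2 := by
      simp only [c]
      field_simp
    have herr : γ * (Λ * η / ε ^ 2) * Λ ≤ δ' / 2 :=
      calc γ * (Λ * η / ε ^ 2) * Λ = γ * Λ ^ 2 / ε ^ 2 * η := by ring
        _ ≤ γ * Λ ^ 2 / ε ^ 2 * (δ' * ε ^ 2 / (2 * γ * Λ ^ 2)) := by gcongr; exact min_le_right _ _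
        _ = δ' / 2 := by field_simp [hΛ.ne']
    linarith
  refine ⟨η, lt_min hη₁ (by positivity), fun θ hθ M Θ hΘ0 hM0 hMrec hΘrec n => ?_⟩
  calc ‖Θ n‖ ≤ (ρ + δ') ^ n * ‖θ‖ :=
        rmsprop_norm_le_pow hε hγ.le hβ0 hβ1 hΛ.le (by positivity)
          (by linarith [min_le_right δ (1 - ρ)]) hq hA
          (fun x hx => hlin x (hx.trans_le (min_le_left _ _)))
          (fun x hx => hG x (hx.trans_le (min_le_left _ _))) hθ hΘ0 hM0 hMrec hΘrec n
    _ ≤ (ρ + δ) ^ n * ‖θ‖ := by gcongr; exact min_le_left _ _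

end RMSprop

theorem stmt4_general (d : ℕ) (δ ε κ K γ β : ℝ)
    (hδ : 0 < δ) (hε : 0 < ε) (hκ : 0 < κ) (hκK : κ < K)
    (hγ : 0 < γ) (hγ' : γ < 2 * ε / K) (hβ0 : 0 ≤ β) (hβ1 : β ≤ 1)
    (L : EuclideanSpace ℝ (Fin d) → ℝ) (hL : ContDiff ℝ 2 L)
    (hgrad0 : gradient L 0 = 0)
    -- κ I_d ⪯ (Hess L)(0) ⪯ K I_d
    (hHess : ∀ v : EuclideanSpace ℝ (Fin d),
      κ * ‖v‖ ^ 2 ≤ ⟪v, fderiv ℝ (gradient L) 0 v⟫ ∧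
      ⟪v, fderiv ℝ (gradient L) 0 v⟫ ≤ K * ‖v‖ ^ 2)
    (M Θ : EuclideanSpace ℝ (Fin d) → ℕ → EuclideanSpace ℝ (Fin d))
    (hΘ0 : ∀ θ, Θ θ 0 = θ) (hM0 : ∀ θ, M θ 0 = 0)
    (hMrec : ∀ θ, ∀ n : ℕ,
      M θ (n + 1) = β • M θ n + (1 - β) • sq2 (gradient L (Θ θ n)))
    (hΘrec : ∀ θ, ∀ n : ℕ,
      Θ θ (n + 1) = Θ θ n - γ • had (regInvSqrt ε 1 (M θ (n + 1))) (gradient L (Θ θ n))) :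
    ∃ η C : ℝ, 0 < η ∧ 0 < C ∧ ∀ θ ∈ Metric.ball (0 : EuclideanSpace ℝ (Fin d)) η,
      ∀ n : ℕ, 1 ≤ n →
        ‖Θ θ n‖ ≤ C * (max |1 - γ * κ / ε| |1 - γ * K / ε| + δ) ^ n := by
  set ρ := max |1 - γ * κ / ε| |1 - γ * K / ε|
  have hρ1 : ρ < 1 := max_abs_one_sub_lt_one (by positivity) (by gcongr) <| by
    rw [div_lt_iff₀ hε]
    nlinarith [(lt_div_iff₀ (hκ.trans hκK)).1 hγ']
  have hA : ∀ v, ‖v - (γ / ε) • fderiv ℝ (gradient L) 0 v‖ ≤ ρ * ‖v‖ := fun v => by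
    simpa only [div_mul_eq_mul_div] using (fderiv ℝ (gradient L) 0).norm_sub_smul_apply_le
      (hL.isSymmetric_fderiv_gradient 0) (t := γ / ε) (by positivity) hHess v
  obtain ⟨η, hη, hconv⟩ := exists_rmsprop_norm_le_pow hε hγ hβ0 hβ1 hδ
    ((abs_nonneg _).trans (le_max_left _ _)) hρ1 hA (hL.differentiable_gradient 0).hasFDerivAt
    hgrad0
  refine ⟨η, η, hη, hη, fun θ hθ n _ => ?_⟩
  rw [mem_ball_zero_iff] at hθ
  calc ‖Θ θ n‖ ≤ (ρ + δ) ^ n * ‖θ‖ :=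
        hconv θ hθ (M θ) (Θ θ) (hΘ0 θ) (hM0 θ) (hMrec θ) (hΘrec θ) n
    _ ≤ η * (ρ + δ) ^ n := by
      rw [mul_comm]
      gcongr

/-- Local exponential convergence of RMSprop. -/
theorem stmt4 (d : ℕ) (hd : 0 < d) (δ ε κ K γ β : ℝ)
    (hδ : 0 < δ) (hε : 0 < ε) (hκ : 0 < κ) (hκK : κ < K)
    (hγ : 0 < γ) (hγ' : γ < 2 * ε / K) (hβ0 : 0 ≤ β) (hβ1 : β ≤ 1)
    (L : EuclideanSpace ℝ (Fin d) → ℝ) (hL : ContDiff ℝ 2 L)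
    (hgrad0 : gradient L 0 = 0)
    -- κ I_d ⪯ (Hess L)(0) ⪯ K I_d
    (hHess : ∀ v : EuclideanSpace ℝ (Fin d),
      κ * ‖v‖ ^ 2 ≤ ⟪v, fderiv ℝ (gradient L) 0 v⟫ ∧
      ⟪v, fderiv ℝ (gradient L) 0 v⟫ ≤ K * ‖v‖ ^ 2)
    (M Θ : EuclideanSpace ℝ (Fin d) → ℕ → EuclideanSpace ℝ (Fin d))
    (hΘ0 : ∀ θ, Θ θ 0 = θ) (hM0 : ∀ θ, M θ 0 = 0)
    (hMrec : ∀ θ, ∀ n : ℕ,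
      M θ (n + 1) = β • M θ n + (1 - β) • sq2 (gradient L (Θ θ n)))
    (hΘrec : ∀ θ, ∀ n : ℕ,
      Θ θ (n + 1) = Θ θ n - γ • had (regInvSqrt ε 1 (M θ (n + 1))) (gradient L (Θ θ n))) :
    ∃ η C : ℝ, 0 < η ∧ 0 < C ∧ ∀ θ ∈ Metric.ball (0 : EuclideanSpace ℝ (Fin d)) η,
      ∀ n : ℕ, 1 ≤ n →
        ‖Θ θ n‖ ≤ C * (max |1 - γ * κ / ε| |1 - γ * K / ε| + δ) ^ n :=
  stmt4_general d δ ε κ K γ β hδ hε hκ hκK hγ hγ' hβ0 hβ1 L hL hgrad0 hHess M Θ hΘ0 hM0 hMrec hΘrec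
end
end

section
/- Let d ∈ ℕ, α ∈ (0,1), γ ∈ (0,∞), let H ∈ ℝ^{d×d} be symmetric with eigenvalues λ_1, ..., λ_d (i.e., spec(H) = {λ_1, ..., λ_d}), for every i ∈ {1,...,d} let μ_±^{(i)} = (1 + α − γλ_i(1−α))/2 ± sqrt(((1 + α − γλ_i(1−α))/2)² − α) (as complex numbers), and let A ∈ ℝ^{2d×2d} be the block matrix A = [[I_d − (1−α)γH, −αγI_d], [(1−α)H, αI_d]]. Then the spectrum of A (as a complex matrix) equals the union over i ∈ {1,...,d} of {μ_+^{(i)}, μ_−^{(i)}}. -/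
/-!
The lower-right block of `X • 1 - A` is the scalar `(X - α) • 1`, and `X - α` is a non-zero-divisor
in `ℝ[X]`, so eliminating the lower-left block gives the characteristic polynomial
`det (((X - 1) * (X - α)) • 1 + ((1 - α) * γ * X) • H)`. Diagonalising the symmetric `H` orthogonally
turns this into `∏ᵢ ((X - 1) * (X - α) + (1 - α) * γ * λᵢ * X)`, and the `i`-th factor is
`(X - μ₊⁽ⁱ⁾) * (X - μ₋⁽ⁱ⁾)`.
-/

open Matrix Polynomial

namespace Matrix

variable {n : Type*} [Fintype n] [DecidableEq n] {R : Type*} [CommRing R]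

theorem det_fromBlocks_smul_one_of_isRegular (A B C : Matrix n n R) {s : R} (hs : IsRegular s) :
    det (fromBlocks A B C (s • 1)) = det (s • A - B * C) := by
  have hprod : fromBlocks A B C (s • 1) * fromBlocks (s • 1) 0 (-C) 1 =
      fromBlocks (s • A - B * C) B 0 (s • 1) := by
    rw [fromBlocks_multiply]
    congr 1 <;> simp [sub_eq_add_neg]
  have h := congrArg det hprod
  rw [det_mul, det_fromBlocks_zero₁₂, det_fromBlocks_zero₂₁, det_one, mul_one] at h
  exact (hs.pow _).right.eq_iff.mp (by simpa [det_smul] using h)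

theorem charmatrix_smul_one (a : R) : charmatrix (a • (1 : Matrix n n R)) = (X - C a) • 1 := by
  ext i j
  by_cases h : i = j <;> simp [h]

theorem det_smul_one_add_smul_conj {P Q : Matrix n n R} (hPQ : P * Q = 1) (D : Matrix n n R)
    (a b : R) : det (a • 1 + b • (P * D * Q)) = det (a • 1 + b • D) := by
  have : a • 1 + b • (P * D * Q) = P * (a • 1 + b • D) * Q := by
    simp only [Matrix.mul_add, Matrix.add_mul, Matrix.mul_smul, Matrix.smul_mul, Matrix.mul_one,
      hPQ, Matrix.mul_assoc]
  rw [this, det_mul, det_mul, mul_right_comm, ← det_mul, hPQ, det_one, one_mul]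

theorem IsHermitian.det_smul_one_add_smul_map {𝕜 : Type*} [RCLike 𝕜] {H : Matrix n n 𝕜}
    (hH : H.IsHermitian) (f : 𝕜 →+* R) (a b : R) :
    det (a • 1 + b • H.map f) = ∏ i, (a + b * f (hH.eigenvalues i)) := by
  have hU : (hH.eigenvectorUnitary : Matrix n n 𝕜).map f *
      (star (hH.eigenvectorUnitary : Matrix n n 𝕜)).map f = 1 := by
    rw [← Matrix.map_mul, Unitary.mul_star_self_of_mem hH.eigenvectorUnitary.2,
      Matrix.map_one _ f.map_zero f.map_one]
  conv_lhs =>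
    rw [hH.spectral_theorem, Unitary.conjStarAlgAut_apply, Matrix.map_mul, Matrix.map_mul]
  rw [det_smul_one_add_smul_conj hU, diagonal_map f.map_zero, ← diagonal_one, ← diagonal_smul,
    ← diagonal_smul, diagonal_add, det_diagonal]
  simp

end Matrix

section Momentum

variable {n : Type*} [Fintype n] [DecidableEq n]

/-- The matrix of `(x, m) ↦ (x - γ m', m')` with `m' = α m + (1 - α) H x`: gradient descent with
step size `γ` and exponential-moving-average momentum `α` on a quadratic with Hessian `H`. -/
def momentumMatrix {R : Type*} [CommRing R] (α γ : R) (H : Matrix n n R) :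
    Matrix (n ⊕ n) (n ⊕ n) R :=
  fromBlocks (1 - ((1 - α) * γ) • H) ((-(α * γ)) • 1) ((1 - α) • H) (α • 1)

theorem charpoly_momentumMatrix {R : Type*} [CommRing R] (α γ : R) (H : Matrix n n R) :
    (momentumMatrix α γ H).charpoly =
      det (((X - 1) * (X - C α)) • (1 : Matrix n n R[X]) + (C ((1 - α) * γ) * X) • H.map C) := by
  rw [charpoly, momentumMatrix, charmatrix_fromBlocks, charmatrix_smul_one,
    det_fromBlocks_smul_one_of_isRegular _ _ _ (monic_X_sub_C α).isRegular]
  congr 1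
  refine Matrix.ext fun i j => ?_
  simp [charmatrix, one_apply, diagonal_apply, Matrix.mul_apply, apply_ite C, ite_mul]
  split_ifs <;> ring

theorem spectrum_map_momentumMatrix {H : Matrix n n ℝ} (hH : H.IsSymm) (α γ : ℝ) :
    spectrum ℂ ((momentumMatrix α γ H).map Complex.ofReal) =
      {z : ℂ | ∃ x ∈ spectrum ℝ H, (z - 1) * (z - α) + (1 - α) * γ * x * z = 0} := by
  have hH' : H.IsHermitian := isHermitian_iff_isSymm.mpr hH
  have hchar : ((momentumMatrix α γ H).map Complex.ofReal).charpoly =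
      (momentumMatrix α γ H).charpoly.map Complex.ofRealHom :=
    charpoly_map (momentumMatrix α γ H) Complex.ofRealHom
  ext z
  rw [Set.mem_ofPred_eq, hH'.spectrum_real_eq_range_eigenvalues, Set.exists_range_iff,
    mem_spectrum_iff_isRoot_charpoly, hchar, charpoly_momentumMatrix,
    hH'.det_smul_one_add_smul_map, IsRoot, eval_map, eval₂_finsetProd, Finset.prod_eq_zero_iff]
  simp [mul_right_comm]

end Momentum

theorem ite_sqrt_sq (a b : ℝ) :
    (if a ≤ b then ((√(b - a) : ℝ) : ℂ) else Complex.I * ((√(a - b) : ℝ) : ℂ)) ^ 2 = b - a := by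
  split_ifs with h
  · rw [← Complex.ofReal_pow, Real.sq_sqrt (sub_nonneg.mpr h), Complex.ofReal_sub]
  · rw [mul_pow, Complex.I_sq, ← Complex.ofReal_pow, Real.sq_sqrt (by linarith)]
    push_cast
    ring

theorem stmt6_general (d : ℕ) (α γ : ℝ)
    (H : Matrix (Fin d) (Fin d) ℝ) (hH : H.IsSymm)
    (lam : Fin d → ℝ) (hspec : spectrum ℝ H = Set.range lam)
    (c : Fin d → ℝ) (hc : ∀ i, c i = (1 + α - γ * lam i * (1 - α)) / 2)
    (μp μm : Fin d → ℂ)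
    (hμp : ∀ i, μp i = (c i : ℂ) +
      (if α ≤ (c i) ^ 2 then ((Real.sqrt ((c i) ^ 2 - α) : ℝ) : ℂ)
        else Complex.I * ((Real.sqrt (α - (c i) ^ 2) : ℝ) : ℂ)))
    (hμm : ∀ i, μm i = (c i : ℂ) -
      (if α ≤ (c i) ^ 2 then ((Real.sqrt ((c i) ^ 2 - α) : ℝ) : ℂ)
        else Complex.I * ((Real.sqrt (α - (c i) ^ 2) : ℝ) : ℂ)))
    (A : Matrix (Fin d ⊕ Fin d) (Fin d ⊕ Fin d) ℝ)
    (hA : A = Matrix.fromBlocks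
      (1 - ((1 - α) * γ) • H) ((-(α * γ)) • (1 : Matrix (Fin d) (Fin d) ℝ))
      ((1 - α) • H) (α • (1 : Matrix (Fin d) (Fin d) ℝ))) :
    spectrum ℂ (A.map Complex.ofReal) = ⋃ i : Fin d, ({μp i, μm i} : Set ℂ) := by
  have hfactor : ∀ i z, (z - μp i) * (z - μm i) =
      (z - 1) * (z - α) + (1 - α) * γ * lam i * z := fun i z => by
    have hs := ite_sqrt_sq α (c i ^ 2)
    have hci : (c i : ℂ) = (1 + α - γ * lam i * (1 - α)) / 2 := by rw [hc i]; push_cast; ring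
    push_cast at hs
    rw [hμp, hμm]
    linear_combination -hs - 2 * z * hci
  ext z
  rw [show A = momentumMatrix α γ H from hA, spectrum_map_momentumMatrix hH, hspec]
  simp only [Set.mem_ofPred_eq, Set.exists_range_iff, Set.mem_iUnion, ← hfactor, mul_eq_zero,
    sub_eq_zero, Set.mem_insert_iff, Set.mem_singleton_iff]

/-- Eigenvalues of the momentum iteration block matrix. -/
theorem stmt6 (d : ℕ) (hd : 0 < d) (α γ : ℝ) (hα : 0 < α) (hα1 : α < 1) (hγ : 0 < γ)
    (H : Matrix (Fin d) (Fin d) ℝ) (hH : H.IsSymm)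
    (lam : Fin d → ℝ) (hspec : spectrum ℝ H = Set.range lam)
    (c : Fin d → ℝ) (hc : ∀ i, c i = (1 + α - γ * lam i * (1 - α)) / 2)
    (μp μm : Fin d → ℂ)
    (hμp : ∀ i, μp i = (c i : ℂ) +
      (if α ≤ (c i) ^ 2 then ((Real.sqrt ((c i) ^ 2 - α) : ℝ) : ℂ)
        else Complex.I * ((Real.sqrt (α - (c i) ^ 2) : ℝ) : ℂ)))
    (hμm : ∀ i, μm i = (c i : ℂ) -
      (if α ≤ (c i) ^ 2 then ((Real.sqrt ((c i) ^ 2 - α) : ℝ) : ℂ)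
        else Complex.I * ((Real.sqrt (α - (c i) ^ 2) : ℝ) : ℂ)))
    (A : Matrix (Fin d ⊕ Fin d) (Fin d ⊕ Fin d) ℝ)
    (hA : A = Matrix.fromBlocks
      (1 - ((1 - α) * γ) • H) ((-(α * γ)) • (1 : Matrix (Fin d) (Fin d) ℝ))
      ((1 - α) • H) (α • (1 : Matrix (Fin d) (Fin d) ℝ))) :
    spectrum ℂ (A.map Complex.ofReal) = ⋃ i : Fin d, ({μp i, μm i} : Set ℂ) :=
  stmt6_general d α γ H hH lam hspec c hc μp μm hμp hμm A hA
end

section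
/- Let d ∈ ℕ, λ = (λ_1, ..., λ_d) ∈ (0,∞)^d, κ = min{λ_1,...,λ_d}, K = max{λ_1,...,λ_d}, let L : ℝ^d → ℝ satisfy L(θ) = (1/2)Σ_{i=1}^d λ_i |θ_i|² for all θ = (θ_1,...,θ_d) ∈ ℝ^d, let γ ∈ (0, 1/sqrt(κK)], α = ((1 − γκ)/(1 + γκ))², let Γ : ℕ → (0,∞)^d, m : ℕ_0 → ℝ^d, Θ : ℕ_0 → ℝ^d satisfy for all n ∈ ℕ that m_n = α m_{n−1} + (1−α)(∇L)(Θ_{n−1}) and Θ_n = Θ_{n−1} − Γ_n ⊙ m_n, and assume lim_{n→∞} Γ_n = γ𝟙_d. Then for every δ > 0 there exists C > 0 such that for all n ∈ ℕ_0 it holds that ‖Θ_n‖ ≤ C · (sqrt(α) + δ)^n. -/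
open Filter

noncomputable section

/-!
In each coordinate `i` the pair `(m_n^i, Θ_n^i)` evolves by a `2 × 2` linear map depending on the
step size `Γ_n^i`. For the limiting step size `γ` this map `T` satisfies `T² = t T - α` with
`t² ≤ 4α`; this discriminant condition is exactly what `γ ≤ 1 / √(κK)` and the choice of `α`
buy. Hence `T^(n+1) = U_{n+1} T - α U_n` with the Lucas sequence `U = U(t, α)`, and
`|U_{n+1}| ≤ (n + 1) √α^n`, so `‖T^n‖ ≤ C r^n` for every `r > √α`. As `Γ_n → γ𝟙`, the actual
steps are small perturbations of `T`, and a discrete variation-of-constants estimate keeps the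
rate below `√α + δ`.
-/

open Asymptotics Topology Finset

def lucasU (P Q : ℝ) : ℕ → ℝ
  | 0 => 0
  | 1 => 1
  | n + 2 => P * lucasU P Q (n + 1) - Q * lucasU P Q n

namespace lucasU

variable {P Q : ℝ}

theorem sq_sub_mul_add_mul_sq (n : ℕ) :
    lucasU P Q (n + 1) ^ 2 - P * lucasU P Q (n + 1) * lucasU P Q n + Q * lucasU P Q n ^ 2
      = Q ^ n := by
  induction n with
  | zero => simp [lucasU]
  | succ n ih =>
    rw [lucasU, pow_succ Q n, ← ih]
    ring

theorem abs_succ_le (hQ : 0 ≤ Q) (hPQ : P ^ 2 ≤ 4 * Q) (n : ℕ) :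
    |lucasU P Q (n + 1)| ≤ (n + 1) * √Q ^ n := by
  induction n with
  | zero => simp [lucasU]
  | succ n ih =>
    have hsqrt : √Q ^ 2 = Q := Real.sq_sqrt hQ
    have hP : |P| ≤ 2 * √Q :=
      abs_le_of_sq_le_sq (by rw [mul_pow, hsqrt]; linarith) (by positivity)
    -- the invariant reads `(U_{n+2} - P U_{n+1} / 2)² + (Q - P² / 4) U_{n+1}² = Q^(n+1)`
    have hstep : |lucasU P Q (n + 2) - P / 2 * lucasU P Q (n + 1)| ≤ √Q ^ (n + 1) := by
      refine abs_le_of_sq_le_sq ?_ (by positivity)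
      rw [← pow_mul, pow_mul', hsqrt]
      nlinarith [sq_sub_mul_add_mul_sq (P := P) (Q := Q) (n + 1), sq_nonneg (lucasU P Q (n + 1))]
    calc |lucasU P Q (n + 2)|
        ≤ |lucasU P Q (n + 2) - P / 2 * lucasU P Q (n + 1)| + |P| / 2 * |lucasU P Q (n + 1)| := by
          have h := abs_add_le (lucasU P Q (n + 2) - P / 2 * lucasU P Q (n + 1))
            (P / 2 * lucasU P Q (n + 1))
          rwa [sub_add_cancel, abs_mul, abs_div, abs_two] at h
      _ ≤ √Q ^ (n + 1) + √Q * ((n + 1) * √Q ^ n) := by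
          gcongr
          linarith
      _ = ((n + 1 : ℕ) + 1) * √Q ^ (n + 1) := by push_cast; ring

theorem mul_abs_le (hQ : 0 ≤ Q) (hPQ : P ^ 2 ≤ 4 * Q) (n : ℕ) :
    Q * |lucasU P Q n| ≤ n * √Q ^ (n + 1) := by
  cases n with
  | zero => simp [lucasU]
  | succ n =>
    calc Q * |lucasU P Q (n + 1)| ≤ √Q ^ 2 * ((n + 1) * √Q ^ n) := by
          rw [Real.sq_sqrt hQ]; exact mul_le_mul_of_nonneg_left (abs_succ_le hQ hPQ n) hQ
      _ = (n + 1 : ℕ) * √Q ^ (n + 1 + 1) := by push_cast; ring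

end lucasU

theorem pow_succ_eq_lucasU {R : Type*} [Ring R] [Algebra ℝ R] {T : R} {P Q : ℝ}
    (hT : T * T = P • T - Q • 1) (n : ℕ) :
    T ^ (n + 1) = lucasU P Q (n + 1) • T - (Q * lucasU P Q n) • 1 := by
  induction n with
  | zero => simp [lucasU]
  | succ n ih =>
    rw [pow_succ, ih, sub_mul, smul_mul_assoc, smul_mul_assoc, hT, one_mul, lucasU]
    module

theorem exists_add_one_mul_pow_le {s r : ℝ} (hs : 0 ≤ s) (hsr : s < r) :
    ∃ C, ∀ n : ℕ, (n + 1) * s ^ n ≤ C * r ^ n := by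
  have hs' : ‖s‖ < r := by rwa [Real.norm_of_nonneg hs]
  have h : (fun n : ℕ => (n + 1) * s ^ n) =O[atTop] fun n => r ^ n := by
    simpa [add_mul] using ((isLittleO_pow_const_mul_const_pow_const_pow_of_norm_lt 1 hs').add
      (isLittleO_pow_const_mul_const_pow_const_pow_of_norm_lt 0 hs')).isBigO
  obtain ⟨C, -, hC⟩ := bound_of_isBigO_nat_atTop h
  refine ⟨C, fun n => ?_⟩
  have hr : 0 < r := hs.trans_lt hsr
  simpa [abs_of_nonneg hs, abs_of_pos hr, abs_of_pos (Nat.cast_add_one_pos (α := ℝ) n)] using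
    hC (pow_ne_zero n hr.ne')

section

variable {R : Type*} [NormedRing R] [NormedAlgebra ℝ R] {T : R} {P Q : ℝ}

theorem norm_pow_le_of_mul_self_eq (hQ : 0 ≤ Q) (hPQ : P ^ 2 ≤ 4 * Q)
    (hT : T * T = P • T - Q • 1) {r : ℝ} (hr : √Q < r) (n : ℕ) :
    ‖T ^ n‖ ≤ (n + 1) * r ^ n * (‖T‖ / r + ‖(1 : R)‖) := by
  have hr0 : 0 < r := (Real.sqrt_nonneg Q).trans_lt hr
  cases n with
  | zero => simpa using div_nonneg (norm_nonneg T) hr0.le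
  | succ n =>
    have hsqrt := Real.sqrt_nonneg Q
    calc ‖T ^ (n + 1)‖
        ≤ |lucasU P Q (n + 1)| * ‖T‖ + Q * |lucasU P Q n| * ‖(1 : R)‖ := by
          rw [pow_succ_eq_lucasU hT]
          refine (norm_sub_le _ _).trans_eq ?_
          rw [norm_smul, norm_smul, Real.norm_eq_abs, Real.norm_eq_abs, abs_mul,
            abs_of_nonneg hQ]
      _ ≤ (n + 1) * √Q ^ n * ‖T‖ + n * √Q ^ (n + 1) * ‖(1 : R)‖ := by
          gcongr ?_ * _ + ?_ * _
          exacts [lucasU.abs_succ_le hQ hPQ n, lucasU.mul_abs_le hQ hPQ n]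
      _ ≤ (n + 2) * r ^ n * ‖T‖ + (n + 2) * r ^ (n + 1) * ‖(1 : R)‖ := by
          gcongr <;> linarith
      _ = ((n + 1 : ℕ) + 1) * r ^ (n + 1) * (‖T‖ / r + ‖(1 : R)‖) := by
          field_simp; push_cast; ring

theorem exists_norm_pow_le_of_mul_self_eq (hQ : 0 ≤ Q) (hPQ : P ^ 2 ≤ 4 * Q)
    (hT : T * T = P • T - Q • 1) {r : ℝ} (hr : √Q < r) :
    ∃ C, ∀ n, ‖T ^ n‖ ≤ C * r ^ n := by
  obtain ⟨s, hQs, hsr⟩ := exists_between hr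
  have hs : 0 < s := (Real.sqrt_nonneg Q).trans_lt hQs
  obtain ⟨C, hC⟩ := exists_add_one_mul_pow_le hs.le hsr
  refine ⟨C * (‖T‖ / s + ‖(1 : R)‖), fun n => ?_⟩
  calc ‖T ^ n‖ ≤ (n + 1) * s ^ n * (‖T‖ / s + ‖(1 : R)‖) :=
        norm_pow_le_of_mul_self_eq hQ hPQ hT hQs n
    _ ≤ C * r ^ n * (‖T‖ / s + ‖(1 : R)‖) :=
        mul_le_mul_of_nonneg_right (hC n) (by have := norm_nonneg T; positivity)
    _ = C * (‖T‖ / s + ‖(1 : R)‖) * r ^ n := by ring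

end

section Perturbation

variable {𝕜 E : Type*} [NontriviallyNormedField 𝕜] [NormedAddCommGroup E] [NormedSpace 𝕜 E]
  {T : E →L[𝕜] E}

theorem eq_pow_apply_add_sum {x e : ℕ → E} (hx : ∀ n, x (n + 1) = T (x n) + e n) (n : ℕ) :
    x n = (T ^ n) (x 0) + ∑ k ∈ range n, (T ^ (n - 1 - k)) (e k) := by
  induction n with
  | zero => simp
  | succ n ih =>
    rw [hx n, ih, map_add, map_sum, sum_range_succ, Nat.add_sub_cancel, Nat.sub_self, pow_zero,
      ← mul_apply_eq_comp, ← pow_succ', add_assoc]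
    congr 2
    refine sum_congr rfl fun k hk => ?_
    rw [← mul_apply_eq_comp, ← pow_succ']
    congr 3
    have := mem_range.1 hk
    omega

theorem norm_le_mul_pow_of_norm_sub_le {A : ℕ → E →L[𝕜] E} {x : ℕ → E} {C r β : ℝ}
    (hT : ∀ n, ‖T ^ n‖ ≤ C * r ^ n) (hA : ∀ n, ‖A n - T‖ ≤ β)
    (hx : ∀ n, x (n + 1) = A n (x n)) (n : ℕ) :
    ‖x n‖ ≤ C * ‖x 0‖ * (r + C * β) ^ n := by
  set ρ := r + C * β
  induction n using Nat.strong_induction_on with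
  | _ n ih =>
  have hsum : ∑ k ∈ range n, C * r ^ (n - 1 - k) * (β * (C * ‖x 0‖ * ρ ^ k))
      = C * ‖x 0‖ * (ρ ^ n - r ^ n) := by
    rw [← geom_sum₂_mul, show ρ - r = C * β by ring, sum_mul, mul_sum]
    exact sum_congr rfl fun k _ => by ring
  have hsummand (k : ℕ) (hk : k ∈ range n) :
      ‖(T ^ (n - 1 - k)) ((A k - T) (x k))‖
        ≤ C * r ^ (n - 1 - k) * (β * (C * ‖x 0‖ * ρ ^ k)) :=
    (T ^ (n - 1 - k)).le_of_opNorm_le_of_le (hT _)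
      ((A k - T).le_of_opNorm_le_of_le (hA k) (ih k (mem_range.1 hk)))
  rw [eq_pow_apply_add_sum (T := T) (x := x) (e := fun k => (A k - T) (x k))
    (fun n => by rw [hx n, sub_apply, add_sub_cancel]) n]
  calc ‖(T ^ n) (x 0) + ∑ k ∈ range n, (T ^ (n - 1 - k)) ((A k - T) (x k))‖
      ≤ C * r ^ n * ‖x 0‖
          + ∑ k ∈ range n, C * r ^ (n - 1 - k) * (β * (C * ‖x 0‖ * ρ ^ k)) :=
        (norm_add_le _ _).trans (add_le_add ((T ^ n).le_of_opNorm_le (hT n) _)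
          ((norm_sum_le _ _).trans (sum_le_sum hsummand)))
    _ = C * ‖x 0‖ * ρ ^ n := by rw [hsum]; ring

theorem isBigO_pow_of_tendsto {A : ℕ → E →L[𝕜] E} {x : ℕ → E} {C r ρ : ℝ}
    (hr : 0 ≤ r) (hrρ : r < ρ) (hT : ∀ n, ‖T ^ n‖ ≤ C * r ^ n) (hA : Tendsto A atTop (𝓝 T))
    (hx : ∀ n, x (n + 1) = A n (x n)) :
    x =O[atTop] fun n => ρ ^ n := by
  have hC : 0 ≤ C := by simpa using (norm_nonneg _).trans (hT 0)
  have hρ : 0 < ρ := hr.trans_lt hrρ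
  set β := (ρ - r) / (C + 1)
  have hβ : 0 < β := div_pos (by linarith) (by linarith)
  have hCβ : r + C * β ≤ ρ := by
    have : (C + 1) * β = ρ - r := mul_div_cancel₀ _ (by linarith)
    nlinarith
  obtain ⟨N, hN⟩ := eventually_atTop.1 (hA.eventually (Metric.closedBall_mem_nhds T hβ))
  have hshift (k : ℕ) : ‖x (N + k)‖ ≤ C * ‖x N‖ * (r + C * β) ^ k :=
    norm_le_mul_pow_of_norm_sub_le (A := fun k => A (N + k)) (x := fun k => x (N + k)) hT
      (fun k => by simpa [dist_eq_norm] using hN (N + k) (Nat.le_add_right N k))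
      (fun k => hx (N + k)) k
  refine isBigO_iff.2 ⟨C * ‖x N‖ / ρ ^ N, eventually_atTop.2 ⟨N, fun n hn => ?_⟩⟩
  obtain ⟨k, rfl⟩ := Nat.exists_eq_add_of_le hn
  calc ‖x (N + k)‖ ≤ C * ‖x N‖ * ρ ^ k := (hshift k).trans (by gcongr)
    _ = C * ‖x N‖ / ρ ^ N * ‖ρ ^ (N + k)‖ := by
      rw [Real.norm_of_nonneg (by positivity), pow_add]; field_simp

end Perturbation

/-- One step of the recursion in a single coordinate with curvature `l` and step size `g`, acting
on the state `(m_n, Θ_n)`. -/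
def momentumStep (α l g : ℝ) : (ℝ × ℝ) →L[ℝ] (ℝ × ℝ) :=
  let v : (ℝ × ℝ) →L[ℝ] ℝ := α • .fst ℝ ℝ ℝ + ((1 - α) * l) • .snd ℝ ℝ ℝ
  v.prod (.snd ℝ ℝ ℝ - g • v)

namespace momentumStep

variable {α l g : ℝ}

@[simp]
theorem apply (z : ℝ × ℝ) :
    momentumStep α l g z =
      (α * z.1 + (1 - α) * l * z.2, z.2 - g * (α * z.1 + (1 - α) * l * z.2)) := rfl

theorem mul_self :
    momentumStep α l g * momentumStep α l g
      = (1 + α - g * (1 - α) * l) • momentumStep α l g - α • 1 := by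
  ext <;> simp <;> ring

theorem continuous : Continuous (momentumStep α l) :=
  continuous_clm_apply.2 fun z => by simp only [apply]; fun_prop

end momentumStep

/-- The characteristic polynomial `z² - t z + α` of `momentumStep α l γ` has nonpositive
discriminant, so both eigenvalues have modulus `√α`. -/
theorem momentum_trace_sq_le_four_mul {α γ κ l : ℝ} (hγ : 0 ≤ γ) (hκ : 0 ≤ κ) (hκl : κ ≤ l)
    (hl : γ ^ 2 * κ * l ≤ 1) (hα : α = ((1 - γ * κ) / (1 + γ * κ)) ^ 2) :
    (1 + α - γ * (1 - α) * l) ^ 2 ≤ 4 * α := by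
  have hpos : 0 < 1 + γ * κ := by positivity
  have hαeq : α * (1 + γ * κ) ^ 2 = (1 - γ * κ) ^ 2 := by rw [hα]; field_simp
  have key : (4 * α - (1 + α - γ * (1 - α) * l) ^ 2) * (1 + γ * κ) ^ 4
      = 16 * ((1 - γ ^ 2 * κ * l) * (γ ^ 2 * κ * (l - κ))) := by
    have htr : (1 + α - γ * (1 - α) * l) * (1 + γ * κ) ^ 2
        = 2 * (1 + (γ * κ) ^ 2 - 2 * (γ ^ 2 * κ * l)) := by
      linear_combination (1 + γ * l) * hαeq
    linear_combination (4 * (1 + γ * κ) ^ 2) * hαeq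
      - ((1 + α - γ * (1 - α) * l) * (1 + γ * κ) ^ 2
        + 2 * (1 + (γ * κ) ^ 2 - 2 * (γ ^ 2 * κ * l))) * htr
  have : 0 ≤ (1 - γ ^ 2 * κ * l) * (γ ^ 2 * κ * (l - κ)) :=
    mul_nonneg (by linarith) (by have := sub_nonneg.2 hκl; positivity)
  nlinarith [pow_pos hpos 4]

theorem gradient_half_sum_mul_sq {ι : Type*} [Fintype ι] (lam : ι → ℝ)
    (θ : EuclideanSpace ℝ ι) :
    gradient (fun θ : EuclideanSpace ℝ ι => 1 / 2 * ∑ i, lam i * θ i ^ 2) θ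
      = WithLp.toLp 2 (fun i => lam i * θ i) := by
  refine HasGradientAt.gradient (hasGradientAt_iff_hasFDerivAt.2 ?_)
  have h (i : ι) : HasFDerivAt (fun θ : EuclideanSpace ℝ ι => lam i * θ i ^ 2)
      ((lam i * (2 * θ i)) • EuclideanSpace.proj (𝕜 := ℝ) i) θ := by
    simpa [smul_smul] using
      ((EuclideanSpace.proj (𝕜 := ℝ) i).hasFDerivAt.pow 2).const_mul (lam i)
  refine ((HasFDerivAt.fun_sum fun i _ => h i).const_mul (1 / 2)).congr_fderiv ?_
  ext v
  simp [PiLp.inner_apply, mul_sum]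
  exact sum_congr rfl fun i _ => by ring

theorem EuclideanSpace.isBigO_iff {𝕜 ι α F : Type*} [RCLike 𝕜] [Fintype ι]
    [SeminormedAddCommGroup F] {l : Filter α} {f : α → EuclideanSpace 𝕜 ι} {g : α → F} :
    f =O[l] g ↔ ∀ i, (fun x => f x i) =O[l] g := by
  let e := PiLp.continuousLinearEquiv 2 𝕜 fun _ : ι => 𝕜
  exact ⟨fun h => isBigO_pi.1 ((e.isBigO_comp f l).trans h),
    fun h => (e.isBigO_comp_rev f l).trans (isBigO_pi.2 h)⟩

theorem sq_mul_le_one_of_le_one_div_sqrt {γ a : ℝ} (hγ : 0 ≤ γ) (ha : 0 < a)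
    (hγa : γ ≤ 1 / √a) : γ ^ 2 * a ≤ 1 := by
  have hs : 0 < √a := Real.sqrt_pos.2 ha
  calc γ ^ 2 * a = (γ * √a) ^ 2 := by rw [mul_pow, Real.sq_sqrt ha.le]
    _ ≤ 1 := pow_le_one₀ (by positivity) ((le_div_iff₀ hs).1 hγa)

theorem isBigO_pow_of_momentum {α l γ ρ : ℝ} {g u v : ℕ → ℝ} (hα : 0 ≤ α)
    (htr : (1 + α - γ * (1 - α) * l) ^ 2 ≤ 4 * α) (hρ : √α < ρ) (hg : Tendsto g atTop (𝓝 γ))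
    (hu : ∀ n, u (n + 1) = α * u n + (1 - α) * l * v n)
    (hv : ∀ n, v (n + 1) = v n - g n * u (n + 1)) :
    v =O[atTop] fun n => ρ ^ n := by
  obtain ⟨r, hαr, hrρ⟩ := exists_between hρ
  obtain ⟨C, hC⟩ := exists_norm_pow_le_of_mul_self_eq hα htr momentumStep.mul_self hαr
  have hx := isBigO_pow_of_tendsto (x := fun n => (u n, v n))
    (A := fun n => momentumStep α l (g n)) ((Real.sqrt_nonneg α).trans hαr.le) hrρ hC
    ((momentumStep.continuous.tendsto γ).comp hg) (fun n => by ext <;> simp [hu, hv])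
  exact isBigO_snd_prod.trans hx

theorem stmt9_general (d : ℕ) (lam : Fin d → ℝ) (hlam : ∀ i, 0 < lam i)
    (κ K : ℝ) (hκ : IsLeast (Set.range lam) κ) (hK : IsGreatest (Set.range lam) K)
    (L : EuclideanSpace ℝ (Fin d) → ℝ)
    (hL : ∀ θ : EuclideanSpace ℝ (Fin d), L θ = (1 / 2) * ∑ i, lam i * (θ i) ^ 2)
    (γ α : ℝ) (hγ0 : 0 < γ) (hγ : γ ≤ 1 / Real.sqrt (κ * K))
    (hα : α = ((1 - γ * κ) / (1 + γ * κ)) ^ 2)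
    (Γ : ℕ → EuclideanSpace ℝ (Fin d))
    (m Θ : ℕ → EuclideanSpace ℝ (Fin d))
    (hm : ∀ n : ℕ, m (n + 1) = α • m n + (1 - α) • gradient L (Θ n))
    (hΘ : ∀ n : ℕ, Θ (n + 1) = Θ n - had (Γ (n + 1)) (m (n + 1)))
    (hΓlim : Tendsto Γ atTop (nhds (γ • ones d)))
    (δ : ℝ) (hδ : 0 < δ) :
    ∃ C : ℝ, 0 < C ∧ ∀ n : ℕ, ‖Θ n‖ ≤ C * (Real.sqrt α + δ) ^ n := by
  obtain ⟨⟨i₀, hi₀⟩, hκle⟩ := hκ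
  obtain ⟨⟨i₁, hi₁⟩, hKge⟩ := hK
  have hκ0 : 0 < κ := hi₀ ▸ hlam i₀
  have hγκK : γ ^ 2 * (κ * K) ≤ 1 :=
    sq_mul_le_one_of_le_one_div_sqrt hγ0.le (mul_pos hκ0 (hi₁ ▸ hlam i₁)) hγ
  have hgrad (θ : EuclideanSpace ℝ (Fin d)) (i : Fin d) : gradient L θ i = lam i * θ i := by
    rw [funext hL, gradient_half_sum_mul_sq]
  have hΘi (i : Fin d) : (fun n => Θ n i) =O[atTop] fun n => (√α + δ) ^ n := by
    have hΓi : Tendsto (fun n => Γ (n + 1) i) atTop (𝓝 γ) := by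
      simpa [ones, Function.comp_def] using ((PiLp.continuous_apply 2 _ i).tendsto _).comp
        (hΓlim.comp (tendsto_add_atTop_nat 1))
    have hγκl : γ ^ 2 * κ * lam i ≤ 1 := by
      nlinarith [hKge ⟨i, rfl⟩, mul_pos (pow_pos hγ0 2) hκ0]
    refine isBigO_pow_of_momentum (α := α) (l := lam i) (u := fun n => m n i)
      (by rw [hα]; positivity)
      (momentum_trace_sq_le_four_mul hγ0.le hκ0.le (hκle ⟨i, rfl⟩) hγκl hα) (by linarith) hΓi
      (fun n => by simp [hm n, hgrad]; ring) (fun n => by simp [hΘ n, had])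
  obtain ⟨C, hC, hbound⟩ := bound_of_isBigO_nat_atTop (EuclideanSpace.isBigO_iff.2 hΘi)
  have hρ : 0 < √α + δ := by positivity
  exact ⟨C, hC, fun n => by simpa [abs_of_pos hρ] using hbound (pow_ne_zero n hρ.ne')⟩

/-- Momentum GD with adaptive learning rates for quadratic objective functions. -/
theorem stmt9 (d : ℕ) (hd : 0 < d) (lam : Fin d → ℝ) (hlam : ∀ i, 0 < lam i)
    (κ K : ℝ) (hκ : IsLeast (Set.range lam) κ) (hK : IsGreatest (Set.range lam) K)
    (L : EuclideanSpace ℝ (Fin d) → ℝ)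
    (hL : ∀ θ : EuclideanSpace ℝ (Fin d), L θ = (1 / 2) * ∑ i, lam i * (θ i) ^ 2)
    (γ α : ℝ) (hγ0 : 0 < γ) (hγ : γ ≤ 1 / Real.sqrt (κ * K))
    (hα : α = ((1 - γ * κ) / (1 + γ * κ)) ^ 2)
    (Γ : ℕ → EuclideanSpace ℝ (Fin d)) (hΓpos : ∀ n : ℕ, ∀ i, 0 < Γ (n + 1) i)
    (m Θ : ℕ → EuclideanSpace ℝ (Fin d))
    (hm : ∀ n : ℕ, m (n + 1) = α • m n + (1 - α) • gradient L (Θ n))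
    (hΘ : ∀ n : ℕ, Θ (n + 1) = Θ n - had (Γ (n + 1)) (m (n + 1)))
    (hΓlim : Tendsto Γ atTop (nhds (γ • ones d)))
    (δ : ℝ) (hδ : 0 < δ) :
    ∃ C : ℝ, 0 < C ∧ ∀ n : ℕ, ‖Θ n‖ ≤ C * (Real.sqrt α + δ) ^ n :=
  stmt9_general d lam hlam κ K hκ hK L hL γ α hγ0 hγ hα Γ m Θ hm hΘ hΓlim δ hδ
end
end
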